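/- arXiv:2501.18226 — 9 statements merged into one kernel-verified Lean document; each statement's English description precedes it below -/
import Mathlib

section
/- Let P be a finite set of N points in [0,1]^d and p ∈ [1,∞]. Define the covering radius h_p(P) = sup_{x ∈ [0,1]^d} min_{y ∈ P} ‖x−y‖_p. Then h_p(P) ≥ N^{−1/d} · (Γ(1+d/p))^{1/d} / (2 Γ(1+1/p)). -/
open scoped ENNReal

/-- The covering radius of a finite point set `P` in the unit cube `[0,1]^d`,
with respect to the `ℓ_p` norm (realized via `PiLp`):
`h_p(P) = sup_{x ∈ [0,1]^d} inf_{y ∈ P} ‖x - y‖_p`. -/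
noncomputable def coveringRadius (d : ℕ) (p : ℝ≥0∞) [Fact (1 ≤ p)]
    (P : Finset (PiLp p fun _ : Fin d => ℝ)) : ℝ :=
  ⨆ x : {x : PiLp p fun _ : Fin d => ℝ // ∀ j, x j ∈ Set.Icc (0:ℝ) 1},
    ⨅ y : P, dist x.1 y.1

open MeasureTheory Metric

lemma endgame {d : ℕ} (hd : 0 < d) {N : ℕ} (hN : 1 ≤ N) {h a b : ℝ}
    (ha : 0 < a) (hb : 0 < b) (hh : 0 ≤ h)
    (hineq : b / ((N:ℝ) * (2*a)^d) ≤ h ^ d) :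
    (N:ℝ) ^ (-(1:ℝ)/(d:ℝ)) * b ^ ((1:ℝ)/(d:ℝ)) / (2*a) ≤ h := by
  have hdR : (0:ℝ) < d := Nat.cast_pos.mpr hd
  have hNR : (0:ℝ) < N := Nat.cast_pos.mpr hN
  have h1 : (b / ((N:ℝ) * (2*a)^d)) ^ ((1:ℝ)/(d:ℝ)) ≤ (h ^ d) ^ ((1:ℝ)/(d:ℝ)) :=
    Real.rpow_le_rpow (by positivity) hineq (by positivity)
  have h2 : (h ^ d : ℝ) ^ ((1:ℝ)/(d:ℝ)) = h := by
    rw [← Real.rpow_natCast h d, ← Real.rpow_mul hh, mul_one_div, div_self hdR.ne',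
      Real.rpow_one]
  have h3 : (b / ((N:ℝ) * (2*a)^d)) ^ ((1:ℝ)/(d:ℝ))
      = (N:ℝ) ^ (-(1:ℝ)/(d:ℝ)) * b ^ ((1:ℝ)/(d:ℝ)) / (2*a) := by
    rw [Real.div_rpow hb.le (by positivity), Real.mul_rpow (by positivity) (by positivity),
      ← Real.rpow_natCast (2*a) d, ← Real.rpow_mul (by positivity), mul_one_div,
      div_self hdR.ne', Real.rpow_one, neg_div, Real.rpow_neg hNR.le]
    have : (N:ℝ) ^ ((1:ℝ)/(d:ℝ)) ≠ 0 := by positivity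
    field_simp
  rw [← h3]
  exact h2 ▸ h1

/-- For a nonempty finite set `P` of `N` points in `[0,1]^d`,
`h_p(P) ≥ N^{-1/d} · Γ(1+d/p)^{1/d} / (2 Γ(1+1/p))`. -/
theorem stmt0 (d : ℕ) (hd : 0 < d) (p : ℝ≥0∞) [Fact (1 ≤ p)]
    (P : Finset (PiLp p fun _ : Fin d => ℝ)) (hne : P.Nonempty)
    (hcube : ∀ x ∈ P, ∀ j, x j ∈ Set.Icc (0:ℝ) 1) :
    coveringRadius d p P ≥
      (P.card : ℝ) ^ (-(1:ℝ)/d) *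
        (Real.Gamma (1 + d / p.toReal)) ^ ((1:ℝ)/d) /
          (2 * Real.Gamma (1 + 1 / p.toReal)) := by
  classical
  have : Nonempty (Fin d) := ⟨⟨0, hd⟩⟩
  set h := coveringRadius d p P with hdef
  set K : Set (PiLp p fun _ : Fin d => ℝ) := {x | ∀ j, x j ∈ Set.Icc (0:ℝ) 1} with hK
  have hKc : IsCompact K := by
    have hKpi : K = WithLp.toLp p '' Set.pi Set.univ (fun _ => Set.Icc (0:ℝ) 1) := by
      ext x
      exact ⟨fun hx => ⟨WithLp.ofLp x, fun i _ => hx i, rfl⟩,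
        by rintro ⟨y, hy, rfl⟩ j; exact hy j (Set.mem_univ j)⟩
    rw [hKpi]; exact (isCompact_univ_pi fun _ => isCompact_Icc).image (PiLp.continuous_toLp p _)
  have hPset : ((P : Set (PiLp p fun _ : Fin d => ℝ))).Nonempty := Finset.coe_nonempty.mpr hne
  have hcr : (⨆ x : K, infDist x.1 (P : Set (PiLp p fun _ : Fin d => ℝ))) = h := by
    rw [hdef]; unfold coveringRadius
    exact iSup_congr fun x => (Metric.infDist_eq_iInf).trans rfl
  have hbdd : BddAbove (Set.range fun x : K =>
      infDist x.1 (P : Set (PiLp p fun _ : Fin d => ℝ))) := by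
    have := (hKc.image (continuous_infDist_pt
      (P : Set (PiLp p fun _ : Fin d => ℝ)))).bddAbove
    rwa [Set.image_eq_range] at this
  have hle : ∀ x : K, infDist x.1 (P : Set (PiLp p fun _ : Fin d => ℝ)) ≤ h :=
    fun x => hcr ▸ le_ciSup hbdd x
  have hh0 : 0 ≤ h := by
    obtain ⟨y0, hy0⟩ := hne
    exact le_trans infDist_nonneg (hle ⟨y0, fun j => hcube y0 hy0 j⟩)
  have hcover : K ⊆ ⋃ y ∈ P, closedBall y h := by
    intro x hx
    obtain ⟨y, hyP, hyd⟩ := (P.finite_toSet.isCompact).exists_infDist_eq_dist hPset x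
    exact Set.mem_iUnion₂.mpr ⟨y, hyP, by rw [mem_closedBall, ← hyd]; exact hle ⟨x, hx⟩⟩
  -- pass to volumes in `Fin d → ℝ`
  set B : (PiLp p fun _ : Fin d => ℝ) → Set (Fin d → ℝ) :=
    fun y => WithLp.toLp p ⁻¹' (closedBall y h : Set (PiLp p fun _ : Fin d => ℝ)) with hB
  set π : (PiLp p fun _ : Fin d => ℝ) → Fin d → ℝ := fun x => x with hπ
  set K0 : Set (Fin d → ℝ) := Set.pi Set.univ (fun _ => Set.Icc (0:ℝ) 1) with hK0
  have hvolK : volume K0 = 1 := by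
    rw [hK0, volume_pi_pi]
    simp [Real.volume_Icc]
  have hBtrans : ∀ y : PiLp p fun _ : Fin d => ℝ, volume (B y) = volume (B 0) := by
    intro y
    have heq : (closedBall y h : Set (PiLp p fun _ : Fin d => ℝ)) =
        (fun z : PiLp p fun _ : Fin d => ℝ => z + -y) ⁻¹'
          (closedBall (0 : PiLp p fun _ : Fin d => ℝ) h) := by
      rw [Metric.preimage_add_right_closedBall]
      norm_num
    have heq2 : B y = (fun z : Fin d → ℝ => z + (-(π y))) ⁻¹' (B 0) := by
      ext z
      simp only [hB, Set.mem_preimage]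
      rw [heq]
      rfl
    rw [heq2]
    exact measure_preimage_add_right volume (-(π y)) (B 0)
  have hcover' : K0 ⊆ ⋃ y ∈ P, B y := by
    intro x hx
    obtain ⟨y, hyP, hz⟩ := Set.mem_iUnion₂.mp (hcover (fun j => hx j (Set.mem_univ j)))
    exact Set.mem_iUnion₂.mpr ⟨y, hyP, hz⟩
  have hmain : (1:ℝ≥0∞) ≤ (P.card : ℝ≥0∞) * volume (B 0) := by
    calc (1:ℝ≥0∞) = volume K0 := hvolK.symm
      _ ≤ volume (⋃ y ∈ P, B y) := measure_mono hcover'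
      _ ≤ ∑ y ∈ P, volume (B y) := measure_biUnion_finset_le _ _
      _ = (P.card : ℝ≥0∞) * volume (B 0) := by
          rw [Finset.sum_congr rfl (fun y _ => hBtrans y), Finset.sum_const, nsmul_eq_mul]
  have hN1 : 1 ≤ P.card := Finset.card_pos.mpr hne
  have ha : 0 < Real.Gamma (1 + 1 / p.toReal) := Real.Gamma_pos_of_pos (by positivity)
  have hb : 0 < Real.Gamma (1 + (d:ℝ) / p.toReal) := Real.Gamma_pos_of_pos (by positivity)
  have hreal : ∀ c : ℝ, 0 ≤ c → volume (B 0) = ENNReal.ofReal c → 1 ≤ (P.card:ℝ) * c := by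
    intro c hc hv
    rw [hv, ← ENNReal.ofReal_natCast, ← ENNReal.ofReal_mul (Nat.cast_nonneg _)] at hmain
    exact ENNReal.one_le_ofReal.mp hmain
  rw [ge_iff_le]
  refine endgame hd hN1 ha hb hh0 ?_
  by_cases hptop : p = ⊤
  · -- p = ∞
    subst hptop
    rw [ENNReal.toReal_top, div_zero, div_zero, add_zero, Real.Gamma_one]
    have hB0eq : B 0 = Set.pi Set.univ (fun _ => Set.Icc (-h) h) := by
      ext z
      have hmem : ∀ w : PiLp ⊤ fun _ : Fin d => ℝ,
          w ∈ closedBall (0 : PiLp ⊤ fun _ : Fin d => ℝ) h ↔ ∀ i, |w i| ≤ h := by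
        intro w
        rw [mem_closedBall, dist_zero_right]
        rw [PiLp.norm_eq_ciSup]
        rw [ciSup_le_iff (Set.Finite.bddAbove (Set.finite_range _))]
        simp [Real.norm_eq_abs]
      constructor
      · intro hz i _
        exact Set.mem_Icc.mpr (abs_le.mp ((hmem (WithLp.toLp ⊤ z)).mp hz i))
      · intro hz
        exact (hmem (WithLp.toLp ⊤ z)).mpr fun i => abs_le.mpr (Set.mem_Icc.mp (hz i (Set.mem_univ i)))
    have hvol : volume (B 0) = ENNReal.ofReal ((2*h)^d) := by
      rw [hB0eq, volume_pi_pi]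
      simp only [Real.volume_Icc, sub_neg_eq_add]
      rw [Finset.prod_const, Finset.card_univ, Fintype.card_fin,
        ← ENNReal.ofReal_pow (by linarith)]
      ring_nf
    have h1 := hreal _ (by positivity) hvol
    rw [div_le_iff₀ (by positivity), mul_pow] at *
    ring_nf at h1 ⊢
    linarith
  · -- p finite
    have hq1 : 1 ≤ p.toReal := by
      rw [← ENNReal.toReal_one]
      exact ENNReal.toReal_mono hptop (Fact.out : 1 ≤ p)
    have hq0 : 0 < p.toReal := lt_of_lt_of_le one_pos hq1
    have hB0eq : B 0 = {x : Fin d → ℝ | (∑ i, |x i| ^ p.toReal) ^ (1 / p.toReal) ≤ h} := by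
      ext z
      have hmem : ∀ w : PiLp p fun _ : Fin d => ℝ,
          w ∈ closedBall (0 : PiLp p fun _ : Fin d => ℝ) h ↔
            (∑ i, |w i| ^ p.toReal) ^ (1 / p.toReal) ≤ h := by
        intro w
        rw [mem_closedBall, PiLp.dist_eq_sum hq0]
        simp [Real.dist_eq]
      exact hmem (WithLp.toLp p z)
    have hvol : volume (B 0) = ENNReal.ofReal
        (h ^ d * ((2 * Real.Gamma (1/p.toReal + 1)) ^ d / Real.Gamma (d/p.toReal + 1))) := by
      rw [hB0eq, volume_sum_rpow_le _ hq1, Fintype.card_fin,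
        ← ENNReal.ofReal_pow hh0, ← ENNReal.ofReal_mul (by positivity)]
    have h1 := hreal _ (by positivity) hvol
    rw [add_comm (1:ℝ) (1/p.toReal), add_comm (1:ℝ) ((d:ℝ)/p.toReal)]
    set a := Real.Gamma (1/p.toReal + 1) with hadef
    set b := Real.Gamma ((d:ℝ)/p.toReal + 1) with hbdef
    have ha' : 0 < a := by rw [hadef]; exact Real.Gamma_pos_of_pos (by positivity)
    have hb' : 0 < b := by rw [hbdef]; exact Real.Gamma_pos_of_pos (by positivity)
    have h2 : b ≤ (P.card:ℝ) * h^d * (2*a)^d := by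
      have h3 := mul_le_mul_of_nonneg_right h1 hb'.le
      rw [one_mul] at h3
      calc b ≤ (P.card:ℝ) * (h ^ d * ((2*a)^d / b)) * b := h3
        _ = (P.card:ℝ) * h^d * (2*a)^d := by field_simp
    rw [div_le_iff₀ (by positivity)]
    ring_nf at h2 ⊢
    linarith
end

section
/- Let b ≥ 2 be an integer and let Q_i denote the first i points of the van der Corput sequence in base b. Then for every i ≥ 2, the mesh ratio ρ_p(Q_i) = h_p(Q_i)/q_p(Q_i) satisfies ρ_p(Q_i) ≤ 2b. Hence the van der Corput sequence is quasi-uniform. -/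
/-- The `n`-th point of the van der Corput sequence in base `b`:
if `n = n_0 + n_1 b + n_2 b^2 + ⋯` then `x_n = n_0/b + n_1/b^2 + ⋯`. -/
noncomputable def vdc (b n : ℕ) : ℝ :=
  ∑ k ∈ Finset.range (Nat.digits b n).length,
    ((Nat.digits b n).getD k 0 : ℝ) / (b : ℝ) ^ (k + 1)

lemma vdc_zero (b : ℕ) : vdc b 0 = 0 := by simp [vdc]

lemma vdc_rec (b : ℕ) (hb : 2 ≤ b) (n : ℕ) :
    vdc b n = ((n % b : ℕ) : ℝ) / (b:ℝ) + vdc b (n / b) / b := by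
  rcases Nat.eq_zero_or_pos n with rfl | hn
  · simp [vdc_zero]
  · simp only [vdc]
    rw [Nat.digits_def' (by omega : 1 < b) hn]
    rw [List.length_cons, Finset.sum_range_succ', Finset.sum_div, add_comm]
    congr 1
    · simp
    · apply Finset.sum_congr rfl
      intro k _
      rw [List.getD_cons_succ, div_div, ← pow_succ]

lemma vdc_nonneg (b n : ℕ) : 0 ≤ vdc b n := by
  apply Finset.sum_nonneg
  intro k _
  positivity

lemma vdc_lt_one (b : ℕ) (hb : 2 ≤ b) : ∀ n, vdc b n < 1 := by
  intro n
  induction n using Nat.strong_induction_on with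
  | _ n ih =>
    rcases Nat.eq_zero_or_pos n with rfl | hn
    · rw [vdc_zero]; norm_num
    · rw [vdc_rec b hb n]
      have hbR : (0:ℝ) < b := by exact_mod_cast (by omega : 0 < b)
      have h1 : ((n % b : ℕ) : ℝ) ≤ (b:ℝ) - 1 := by
        have : (n % b : ℕ) + 1 ≤ b := Nat.mod_lt n (by omega)
        have := (Nat.cast_le (α := ℝ)).mpr this
        push_cast at this
        linarith
      have h2 : vdc b (n / b) < 1 := ih _ (Nat.div_lt_self hn (by omega))
      have h3 : ((n % b : ℕ) : ℝ) / b ≤ ((b:ℝ) - 1) / b := by gcongr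
      have h4 : vdc b (n / b) / b < 1 / b := by gcongr
      have h5 : ((b:ℝ) - 1) / b + 1 / b = 1 := by field_simp; ring
      linarith

lemma vdc_int (b : ℕ) (hb : 2 ≤ b) :
    ∀ m, ∀ j < b^m, ∃ r : ℕ, r < b^m ∧ vdc b j = (r:ℝ) / (b:ℝ)^m := by
  intro m
  induction m with
  | zero =>
    intro j hj
    rw [pow_zero] at hj
    have : j = 0 := by omega
    subst this
    exact ⟨0, by norm_num, by simp [vdc_zero]⟩
  | succ m ih =>
    intro j hj
    have hb0 : 0 < b := by omega
    obtain ⟨r, hr, hvr⟩ := ih (j / b) (by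
      rw [Nat.div_lt_iff_lt_mul hb0]
      calc j < b^(m+1) := hj
        _ = b^m * b := by rw [pow_succ])
    refine ⟨(j % b) * b^m + r, ?_, ?_⟩
    · have hmod : j % b ≤ b - 1 := by
        have := Nat.mod_lt j hb0; omega
      have h1 : (j % b) * b^m ≤ (b-1) * b^m := Nat.mul_le_mul_right _ hmod
      have h2 : (b-1) * b^m + b^m = b^(m+1) := by
        have hb' : b - 1 + 1 = b := by omega
        calc (b-1)*b^m + b^m = (b-1+1)*b^m := by ring
          _ = b^m * b := by rw [hb']; ring
          _ = b^(m+1) := (pow_succ b m).symm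
      omega
    · rw [vdc_rec b hb j, hvr]
      have hbR : (b:ℝ) ≠ 0 := by exact_mod_cast (by omega : b ≠ 0)
      push_cast
      field_simp
      ring

lemma vdc_inj (b : ℕ) (hb : 2 ≤ b) :
    ∀ m, ∀ j < b^m, ∀ l < b^m, vdc b j = vdc b l → j = l := by
  intro m
  induction m with
  | zero =>
    intro j hj l hl _
    rw [pow_zero] at hj hl
    omega
  | succ m ih =>
    intro j hj l hl h
    have hb0 : 0 < b := by omega
    have hbR : (0:ℝ) < b := by exact_mod_cast hb0
    rw [vdc_rec b hb j, vdc_rec b hb l] at h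
    have h' : ((j % b : ℕ):ℝ) + vdc b (j/b) = ((l % b : ℕ):ℝ) + vdc b (l/b) := by
      field_simp at h
      linarith
    have n1 := vdc_nonneg b (j/b)
    have n2 := vdc_nonneg b (l/b)
    have u1 := vdc_lt_one b hb (j/b)
    have u2 := vdc_lt_one b hb (l/b)
    have hmod : j % b = l % b := by
      by_contra hne
      rcases Nat.lt_or_ge (j % b) (l % b) with hlt | hge
      · have hc : ((j % b : ℕ):ℝ) + 1 ≤ ((l % b : ℕ):ℝ) := by
          exact_mod_cast Nat.succ_le_of_lt hlt
        linarith
      · have hlt : l % b < j % b := by omega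
        have hc : ((l % b : ℕ):ℝ) + 1 ≤ ((j % b : ℕ):ℝ) := by
          exact_mod_cast Nat.succ_le_of_lt hlt
        linarith
    have hveq : vdc b (j/b) = vdc b (l/b) := by
      rw [hmod] at h'
      linarith
    have hd1 : j / b < b^m := by
      rw [Nat.div_lt_iff_lt_mul hb0]
      calc j < b^(m+1) := hj
        _ = b^m * b := pow_succ b m
    have hd2 : l / b < b^m := by
      rw [Nat.div_lt_iff_lt_mul hb0]
      calc l < b^(m+1) := hl
        _ = b^m * b := pow_succ b m
    have hdiv : j / b = l / b := ih _ hd1 _ hd2 hveq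
    have e1 := Nat.div_add_mod j b
    have e2 := Nat.div_add_mod l b
    have e3 : b * (j/b) = b * (l/b) := by rw [hdiv]
    omega

lemma vdc_surj (b : ℕ) (hb : 2 ≤ b) (m : ℕ) :
    ∀ k < b^m, ∃ j < b^m, vdc b j = (k:ℝ) / (b:ℝ)^m := by
  have key : ∀ j : Fin (b^m), ∃ r : Fin (b^m), vdc b j = (r:ℝ)/(b:ℝ)^m := by
    intro j
    obtain ⟨r, hr, h⟩ := vdc_int b hb m j j.2
    exact ⟨⟨r, hr⟩, h⟩
  choose g hg using key
  have ginj : Function.Injective g := by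
    intro j l hgl
    have hv : vdc b j = vdc b l := by rw [hg j, hg l, hgl]
    exact Fin.val_injective (vdc_inj b hb m j j.2 l l.2 hv)
  have gsurj : Function.Surjective g := Finite.injective_iff_surjective.mp ginj
  intro k hk
  obtain ⟨j, hj⟩ := gsurj ⟨k, hk⟩
  exact ⟨j, j.2, by rw [hg j, hj]⟩

/-- Covering radius of the first `i` points of the van der Corput sequence in base `b`
(in dimension 1 all `ℓ_p` norms coincide with the absolute value). -/
noncomputable def vdcCov (b i : ℕ) : ℝ :=
  ⨆ x : Set.Icc (0:ℝ) 1, ⨅ j : Fin i, |x.1 - vdc b j|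

/-- Separation radius of the first `i` points of the van der Corput sequence in base `b`. -/
noncomputable def vdcSep (b i : ℕ) : ℝ :=
  sInf {r : ℝ | ∃ j < i, ∃ l < i, vdc b j ≠ vdc b l ∧ r = |vdc b j - vdc b l| / 2}

/-- For the van der Corput sequence in base `b ≥ 2`, the mesh ratio of the first `i ≥ 2`
points is at most `2b`; hence the van der Corput sequence is quasi-uniform. -/
theorem stmt4 (b : ℕ) (hb : 2 ≤ b) (i : ℕ) (hi : 2 ≤ i) :
    vdcCov b i / vdcSep b i ≤ 2 * b := by
  have hb1 : 1 < b := by omega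
  obtain ⟨M, hiM, hiM2⟩ : ∃ M, b^M ≤ i - 1 ∧ i ≤ b^(M+1) := by
    refine ⟨Nat.log b (i-1), Nat.pow_log_le_self b (by omega), ?_⟩
    have h := Nat.lt_pow_succ_log_self hb1 (i-1)
    rw [Nat.succ_eq_add_one] at h
    omega
  have hbR : (0:ℝ) < b := by exact_mod_cast (by omega : 0 < b)
  have hNpos : 0 < b^M := Nat.pow_pos (by omega)
  have hNR : (0:ℝ) < (b:ℝ)^M := by positivity
  -- covering bound
  have hcov : vdcCov b i ≤ 1 / (b:ℝ)^M := by
    haveI : Nonempty (Set.Icc (0:ℝ) 1) := ⟨⟨0, by norm_num⟩⟩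
    unfold vdcCov
    apply ciSup_le
    rintro ⟨x, hx⟩
    obtain ⟨hx0, hx1⟩ := hx
    show (⨅ j : Fin i, |x - vdc b j|) ≤ 1 / (b:ℝ)^M
    obtain ⟨k, hkN, hkdist⟩ :
        ∃ k : ℕ, k < b^M ∧ |x - (k:ℝ)/(b:ℝ)^M| ≤ 1/(b:ℝ)^M := by
      by_cases hcase : x * (b:ℝ)^M < (b:ℝ)^M
      · refine ⟨(⌊x * (b:ℝ)^M⌋).toNat, ?_, ?_⟩
        · have hfl0 : 0 ≤ ⌊x * (b:ℝ)^M⌋ := Int.floor_nonneg.mpr (by positivity)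
          have hfl : (((⌊x * (b:ℝ)^M⌋).toNat : ℕ) : ℝ) = ⌊x*(b:ℝ)^M⌋ := by
            exact_mod_cast Int.toNat_of_nonneg hfl0
          have h1 : (((⌊x * (b:ℝ)^M⌋).toNat : ℕ) : ℝ) ≤ x * (b:ℝ)^M := by
            rw [hfl]; exact Int.floor_le _
          have h2 : (((⌊x * (b:ℝ)^M⌋).toNat : ℕ) : ℝ) < ((b^M : ℕ) : ℝ) := by
            push_cast
            exact lt_of_le_of_lt h1 hcase
          exact_mod_cast h2
        · have hfl0 : 0 ≤ ⌊x * (b:ℝ)^M⌋ := Int.floor_nonneg.mpr (by positivity)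
          have hfl : (((⌊x * (b:ℝ)^M⌋).toNat : ℕ) : ℝ) = ⌊x*(b:ℝ)^M⌋ := by
            exact_mod_cast Int.toNat_of_nonneg hfl0
          have hA : (((⌊x * (b:ℝ)^M⌋).toNat : ℕ) : ℝ) ≤ x * (b:ℝ)^M := by
            rw [hfl]; exact Int.floor_le _
          have hB : x * (b:ℝ)^M < (((⌊x * (b:ℝ)^M⌋).toNat : ℕ) : ℝ) + 1 := by
            rw [hfl]; exact Int.lt_floor_add_one _
          rw [abs_le]
          constructor
          · have : (((⌊x * (b:ℝ)^M⌋).toNat : ℕ) : ℝ) / (b:ℝ)^M ≤ x :=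
              (div_le_iff₀ hNR).mpr hA
            have h1N : (0:ℝ) ≤ 1 / (b:ℝ)^M := by positivity
            linarith
          · have hx' : x ≤ (1 + (((⌊x * (b:ℝ)^M⌋).toNat : ℕ) : ℝ)) / (b:ℝ)^M :=
              (le_div_iff₀ hNR).mpr (by linarith)
            rw [add_div] at hx'
            linarith
      · have hx1' : x = 1 := by
          push_neg at hcase
          have h1 : 1 * (b:ℝ)^M ≤ x * (b:ℝ)^M := by linarith
          have := le_of_mul_le_mul_right (by linarith : 1 * (b:ℝ)^M ≤ x * (b:ℝ)^M) hNR
          linarith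
        refine ⟨b^M - 1, by omega, ?_⟩
        have hcast : ((b^M - 1 : ℕ):ℝ) = (b:ℝ)^M - 1 := by
          have : ((b^M - 1 : ℕ):ℝ) = ((b^M : ℕ):ℝ) - ((1:ℕ):ℝ) := by
            rw [Nat.cast_sub hNpos]
          rw [this]; push_cast; ring
        rw [hx1', hcast]
        have heq : (1:ℝ) - ((b:ℝ)^M - 1)/(b:ℝ)^M = 1/(b:ℝ)^M := by field_simp; ring
        rw [heq, abs_of_nonneg (by positivity)]
    obtain ⟨j, hjN, hjv⟩ := vdc_surj b hb M k hkN
    have hji : j < i := by omega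
    have hbdd : BddBelow (Set.range fun j : Fin i => |x - vdc b ↑j|) := by
      refine ⟨0, ?_⟩
      rintro _ ⟨j, rfl⟩
      positivity
    calc (⨅ j : Fin i, |x - vdc b ↑j|) ≤ |x - vdc b ↑(⟨j, hji⟩ : Fin i)| :=
          ciInf_le hbdd _
      _ = |x - (k:ℝ)/(b:ℝ)^M| := by
          show |x - vdc b j| = _
          rw [hjv]
      _ ≤ 1/(b:ℝ)^M := hkdist
  -- separation bound
  have hsep : 1 / (2 * (b:ℝ)^(M+1)) ≤ vdcSep b i := by
    unfold vdcSep
    apply le_csInf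
    · have h1 : vdc b 1 = 1 / (b:ℝ) := by
        rw [vdc_rec b hb 1, Nat.mod_eq_of_lt (by omega), Nat.div_eq_of_lt (by omega),
          vdc_zero]
        norm_num
      have hne : vdc b 0 ≠ vdc b 1 := by
        rw [vdc_zero, h1]
        exact ((by positivity : (0:ℝ) < 1/(b:ℝ))).ne
      exact ⟨_, 0, by omega, 1, by omega, hne, rfl⟩
    · rintro r ⟨j, hj, l, hl, hne, rfl⟩
      obtain ⟨rj, _, hj'⟩ := vdc_int b hb (M+1) j (by omega)
      obtain ⟨rl, _, hl'⟩ := vdc_int b hb (M+1) l (by omega)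
      have hrne : rj ≠ rl := by
        intro hcontr
        apply hne
        rw [hj', hl', hcontr]
      have hPR : (0:ℝ) < (b:ℝ)^(M+1) := by positivity
      have h1 : (1:ℝ) ≤ |(rj:ℝ) - (rl:ℝ)| := by
        have h2 : (1:ℤ) ≤ |(rj:ℤ) - (rl:ℤ)| := by
          rcases abs_cases ((rj:ℤ) - (rl:ℤ)) with ⟨h, _⟩ | ⟨h, _⟩ <;> omega
        exact_mod_cast h2
      have hdiff : |vdc b j - vdc b l| = |(rj:ℝ) - (rl:ℝ)| / (b:ℝ)^(M+1) := by
        rw [hj', hl', div_sub_div_same, abs_div, abs_of_pos hPR]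
      rw [hdiff]
      have hstep : 1/(b:ℝ)^(M+1) ≤ |(rj:ℝ)-(rl:ℝ)|/(b:ℝ)^(M+1) := by gcongr
      calc 1/(2*(b:ℝ)^(M+1)) = (1/(b:ℝ)^(M+1))/2 := by ring
        _ ≤ (|(rj:ℝ)-(rl:ℝ)|/(b:ℝ)^(M+1))/2 := by linarith
  have hseppos : 0 < vdcSep b i := lt_of_lt_of_le (by positivity) hsep
  rw [div_le_iff₀ hseppos]
  have heq : 1/(b:ℝ)^M = 2*(b:ℝ) * (1/(2*(b:ℝ)^(M+1))) := by
    rw [pow_succ]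
    field_simp
  calc vdcCov b i ≤ 1/(b:ℝ)^M := hcov
    _ = 2*(b:ℝ) * (1/(2*(b:ℝ)^(M+1))) := heq
    _ ≤ 2*(b:ℝ) * vdcSep b i := mul_le_mul_of_nonneg_left hsep (by positivity)
end

section
/- Let b be a prime and P ⊂ [0,1)^d a finite point set which is κ-separated in base b. Then the separation radius in the ℓ_∞ norm satisfies q_∞(P) ≥ (b−1)/(2b) · b^{−κ}. -/
/-- A shifted `b`-adic elementary interval
`J_{c,a,e} = ∏_j [(a_j − e_j/b)/b^{c_j}, (a_j + (b−e_j)/b)/b^{c_j})`. -/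
def shiftedInterval (b d : ℕ) (c a e : Fin d → ℕ) : Set (Fin d → ℝ) :=
  {x | ∀ j, ((a j : ℝ) - (e j : ℝ) / b) / (b : ℝ) ^ c j ≤ x j ∧
        x j < ((a j : ℝ) + ((b : ℝ) - (e j : ℝ)) / b) / (b : ℝ) ^ c j}

/-- `P` is `κ`-separated in base `b`: there is `c` with `c_j ≤ κ` for all `j` such that
every shifted elementary interval `J_{c,a,e} ⊆ [0,1)^d` contains at most one point of `P`. -/
def IsSeparated (b d κ : ℕ) (P : Finset (Fin d → ℝ)) : Prop :=
  ∃ c : Fin d → ℕ, (∀ j, c j ≤ κ) ∧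
    ∀ a e : Fin d → ℕ, (∀ j, a j ≤ b ^ c j) → (∀ j, e j < b) →
      shiftedInterval b d c a e ⊆ {x | ∀ j, x j ∈ Set.Ico (0:ℝ) 1} →
      Set.Subsingleton (↑P ∩ shiftedInterval b d c a e)

lemma onedim (b c : ℕ) (hb : 2 ≤ b) (u v : ℝ)
    (hu0 : 0 ≤ u) (hu1 : u < 1) (hv0 : 0 ≤ v) (hv1 : v < 1)
    (hd : |u - v| < ((b:ℝ) - 1) / (b:ℝ) ^ (c+1)) :
    ∃ a e : ℕ, a ≤ b ^ c ∧ e < b ∧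
      0 ≤ ((a:ℝ) - (e:ℝ)/b) / (b:ℝ)^c ∧ ((a:ℝ) + ((b:ℝ) - e)/b) / (b:ℝ)^c ≤ 1 ∧
      ((a:ℝ) - (e:ℝ)/b) / (b:ℝ)^c ≤ u ∧ u < ((a:ℝ) + ((b:ℝ) - e)/b) / (b:ℝ)^c ∧
      ((a:ℝ) - (e:ℝ)/b) / (b:ℝ)^c ≤ v ∧ v < ((a:ℝ) + ((b:ℝ) - e)/b) / (b:ℝ)^c := by
  set n : ℕ := b ^ (c+1) with hn
  have hbn : b ≤ n := Nat.le_self_pow (by omega) b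
  have hb0 : 0 < b := by omega
  have hbR : (0:ℝ) < b := by exact_mod_cast hb0
  have hnR : (0:ℝ) < n := by positivity
  set t : ℝ := min u v with ht
  set s : ℝ := max u v with hs
  have ht0 : 0 ≤ t := le_min hu0 hv0
  have hs1 : s < 1 := max_lt hu1 hv1
  have hts : t ≤ s := min_le_max
  have hst : s - t < ((b:ℝ) - 1) / n := by
    have heq : s - t = |u - v| := by
      rcases le_total u v with h | h
      · rw [abs_of_nonpos (by linarith), hs, ht, max_eq_right h, min_eq_left h]; ring
      · rw [abs_of_nonneg (by linarith), hs, ht, max_eq_left h, min_eq_right h]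
    rw [heq]
    simpa [hn] using hd
  have hst' : (s - t) * n < (b:ℝ) - 1 := (lt_div_iff₀ hnR).mp hst
  set k : ℕ := ⌊t * n⌋₊ with hk
  have hkt : (k:ℝ) ≤ t * n := Nat.floor_le (by positivity)
  have htk : t * n < k + 1 := Nat.lt_floor_add_one _
  have hkn : k < n := by
    have ht1 : t < 1 := lt_of_le_of_lt hts hs1
    have h2 : t * n < (n:ℝ) := by nlinarith
    exact Nat.floor_lt (by positivity) |>.mpr h2
  set m : ℕ := min k (n - b) with hm
  have hmbn : m + b ≤ n := by omega
  have hml : (m:ℝ) / n ≤ t := by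
    have hmk : (m:ℝ) ≤ k := by exact_mod_cast (Nat.min_le_left _ _)
    rw [div_le_iff₀ hnR]
    nlinarith
  have hmu : s < ((m:ℝ) + b) / n := by
    rcases le_or_gt k (n - b) with h | h
    · have hmk : m = k := by omega
      rw [hmk, lt_div_iff₀ hnR]
      nlinarith
    · have hmk : m = n - b := by omega
      have h1 : ((m:ℝ) + b) / n = 1 := by
        rw [div_eq_one_iff_eq (ne_of_gt hnR), hmk]
        push_cast [hbn]
        ring
      rw [h1]; exact hs1
  -- construct a, e from m
  have hmdm := Nat.div_add_mod m b
  have hrb : m % b < b := Nat.mod_lt _ hb0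
  set r : ℕ := m % b with hr
  set q : ℕ := m / b with hq
  obtain ⟨a, e, heb, habm⟩ : ∃ a e : ℕ, e < b ∧ a * b = m + e := by
    rcases Nat.eq_zero_or_pos r with h | h
    · refine ⟨q, 0, hb0, ?_⟩
      have h2 : q * b = b * q := by ring
      omega
    · refine ⟨q + 1, b - r, by omega, ?_⟩
      have h2 : (q + 1) * b = b * q + b := by ring
      omega
  have han : a * b ≤ n := by omega
  have hab : a ≤ b ^ c := by
    have h2 : b ^ c * b = n := by rw [hn]; ring
    have h3 : a * b ≤ b ^ c * b := by omega
    exact Nat.le_of_mul_le_mul_right h3 hb0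
  have habR : (a:ℝ) * b = (m:ℝ) + e := by exact_mod_cast habm
  have hnb : (n:ℝ) = (b:ℝ)^c * b := by rw [hn]; push_cast; ring
  have hL : ((a:ℝ) - (e:ℝ)/b) / (b:ℝ)^c = (m:ℝ) / n := by
    rw [hnb]; field_simp; linear_combination habR
  have hU : ((a:ℝ) + ((b:ℝ) - e)/b) / (b:ℝ)^c = ((m:ℝ) + b) / n := by
    rw [hnb]; field_simp; linear_combination habR
  have htu : t ≤ u := min_le_left _ _
  have htv : t ≤ v := min_le_right _ _
  have hsu : u ≤ s := le_max_left _ _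
  have hsv : v ≤ s := le_max_right _ _
  have hUb : ((m:ℝ) + b) / n ≤ 1 := by
    rw [div_le_one hnR]
    exact_mod_cast hmbn
  refine ⟨a, e, hab, heb, ?_, ?_, ?_, ?_, ?_, ?_⟩
  · rw [hL]; positivity
  · rw [hU]; exact hUb
  · rw [hL]; linarith
  · rw [hU]; linarith
  · rw [hL]; linarith
  · rw [hU]; linarith

/-- If `P ⊆ [0,1)^d` is `κ`-separated in base `b` (with `b` prime), then any two distinct
points of `P` are at `ℓ_∞` distance at least `(b−1)/b^{κ+1}`, i.e.
`q_∞(P) ≥ (b−1)/(2b) · b^{−κ}`.  (The `ℓ_∞` norm is the sup distance on `Fin d → ℝ`.) -/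
theorem stmt5 (b d κ : ℕ) (hb : b.Prime) (P : Finset (Fin d → ℝ))
    (hP : ∀ x ∈ P, ∀ j, x j ∈ Set.Ico (0:ℝ) 1)
    (hsep : IsSeparated b d κ P) :
    ∀ x ∈ P, ∀ y ∈ P, x ≠ y →
      ((b : ℝ) - 1) / (2 * b) * ((b : ℝ) ^ κ)⁻¹ ≤ dist x y / 2 := by
  obtain ⟨c, hcκ, hsub⟩ := hsep
  intro x hx y hy hxy
  by_contra hlt
  push_neg at hlt
  have hb2 : 2 ≤ b := hb.two_le
  have hbR : (1:ℝ) < b := by exact_mod_cast hb.one_lt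
  have hd : dist x y < ((b:ℝ) - 1) / (b:ℝ) ^ (κ + 1) := by
    have hb0 : (b:ℝ) ≠ 0 := by linarith
    have hp0 : (b:ℝ) ^ κ ≠ 0 := by positivity
    have h : ((b:ℝ) - 1) / (2 * b) * ((b:ℝ) ^ κ)⁻¹ = ((b:ℝ) - 1) / (b:ℝ) ^ (κ+1) / 2 := by
      rw [pow_succ, div_div, div_mul_eq_div_div]
      rw [div_div]
      ring_nf
    rw [h] at hlt
    linarith
  have hdj : ∀ j, |x j - y j| < ((b:ℝ) - 1) / (b:ℝ) ^ (c j + 1) := by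
    intro j
    have h1 : dist (x j) (y j) ≤ dist x y := dist_le_pi_dist x y j
    have h2 : ((b:ℝ) - 1) / (b:ℝ) ^ (κ + 1) ≤ ((b:ℝ) - 1) / (b:ℝ) ^ (c j + 1) := by
      gcongr
      · linarith
      · exact hcκ j
    calc |x j - y j| = dist (x j) (y j) := (Real.dist_eq _ _).symm
      _ ≤ dist x y := h1
      _ < _ := hd
      _ ≤ _ := h2
  choose a e ha he h0 h1 hxl hxu hyl hyu using fun j =>
    onedim b (c j) hb2 (x j) (y j) (hP x hx j).1 (hP x hx j).2 (hP y hy j).1 (hP y hy j).2 (hdj j)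
  have hss := hsub a e ha he (by
    intro z hz j
    exact ⟨le_trans (h0 j) (hz j).1, lt_of_lt_of_le (hz j).2 (h1 j)⟩)
  exact hxy (hss ⟨hx, fun j => ⟨hxl j, hxu j⟩⟩ ⟨hy, fun j => ⟨hyl j, hyu j⟩⟩)
end

section
/- Let b be a prime and P ⊂ [0,1)^d a finite point set which is toroidally κ-separated in base b. Then for every shift δ ∈ [0,1)^d, the shifted set P + δ := {x + δ mod 1 : x ∈ P} satisfies q_{∞,T}(P + δ) ≥ (b−1)/(2b) · b^{−κ}, where q_{∞,T} is the separation radius with respect to the toroidal ℓ_∞ distance. -/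
lemma circ_eq (p q : ℝ) (hp : p ∈ Set.Ioo (-1:ℝ) 1) (hq : q ∈ Set.Ioo (-1:ℝ) 1)
    (k : ℤ) (hk : q = p + k) : min |p| (1 - |p|) = min |q| (1 - |q|) := by
  obtain ⟨hp1, hp2⟩ := hp
  obtain ⟨hq1, hq2⟩ := hq
  have hk1 : (-2:ℝ) < (k:ℝ) := by linarith
  have hk2 : (k:ℝ) < 2 := by linarith
  have hk1' : (-2:ℤ) < k := by exact_mod_cast hk1
  have hk2' : k < 2 := by exact_mod_cast hk2
  interval_cases k
  · have hp0 : 0 < p := by push_cast at hk; linarith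
    have hq0 : q < 0 := by push_cast at hk; linarith
    rw [abs_of_pos hp0, abs_of_neg hq0, min_comm]
    push_cast at hk
    congr 1 <;> linarith
  · simp at hk; simp [hk]
  · have hp0 : p < 0 := by push_cast at hk; linarith
    have hq0 : 0 < q := by push_cast at hk; linarith
    rw [abs_of_neg hp0, abs_of_pos hq0, min_comm]
    push_cast at hk
    congr 1 <;> linarith

lemma repr_t (b c : ℕ) (hb : 2 ≤ b) (t : ℤ) (h1 : -((b:ℤ)-1) ≤ t) (h2 : t ≤ (b:ℤ)^(c+1) - b) :
    ∃ a e : ℕ, a < b ^ c ∧ e < b ∧ (a:ℤ) * b - e = t := by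
  have hb0 : (0:ℤ) < b := by exact_mod_cast Nat.lt_of_lt_of_le Nat.zero_lt_two hb
  set e' : ℤ := (-t) % b with he'
  have he1 : 0 ≤ e' := Int.emod_nonneg _ (by omega)
  have he2 : e' < b := Int.emod_lt_of_pos _ hb0
  have hdvd : (b:ℤ) ∣ (t + e') := by
    have : (-t) % b = -t - b * ((-t) / b) := by rw [Int.emod_def]
    exact ⟨-((-t)/b), by rw [he', this]; ring⟩
  obtain ⟨k, hk⟩ := hdvd
  have hk0 : 0 ≤ k := by nlinarith
  have hkb : k < (b:ℤ)^c := by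
    have hbc : (0:ℤ) < (b:ℤ)^c := pow_pos hb0 c
    by_contra h
    push_neg at h
    have : (b:ℤ)^(c+1) ≤ b * k := by rw [pow_succ]; nlinarith
    nlinarith
  refine ⟨k.toNat, e'.toNat, ?_, ?_, ?_⟩
  · have : ((k.toNat : ℤ)) < ((b^c : ℕ) : ℤ) := by push_cast; omega
    exact_mod_cast this
  · omega
  · have h1' : (e'.toNat : ℤ) = e' := Int.toNat_of_nonneg he1
    have h2' : (k.toNat : ℤ) = k := Int.toNat_of_nonneg hk0
    push_cast [h1', h2']
    linarith [mul_comm k (b:ℤ)]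

lemma interval_of_t (b c : ℕ) (hb : 2 ≤ b) (t : ℤ) (N : ℝ) (hNe : N = (b:ℝ)^(c+1))
    (h1 : -((b:ℤ)-1) ≤ t) (h2 : t ≤ (b:ℤ)^(c+1) - b)
    (u v : ℝ) (zu zv : ℤ)
    (hu1 : (t:ℝ)/N ≤ u + zu) (hu2 : u + zu < ((t:ℝ)+b)/N)
    (hv1 : (t:ℝ)/N ≤ v + zv) (hv2 : v + zv < ((t:ℝ)+b)/N) :
    ∃ a e : ℕ, a < b ^ c ∧ e < b ∧
      (∃ z : ℤ, ((a:ℝ) - (e:ℝ)/b)/(b:ℝ)^c ≤ u + z ∧ u + z < ((a:ℝ) + ((b:ℝ)-(e:ℝ))/b)/(b:ℝ)^c) ∧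
      (∃ z : ℤ, ((a:ℝ) - (e:ℝ)/b)/(b:ℝ)^c ≤ v + z ∧ v + z < ((a:ℝ) + ((b:ℝ)-(e:ℝ))/b)/(b:ℝ)^c) := by
  obtain ⟨a, e, ha, he, hab⟩ := repr_t b c hb t h1 h2
  have hbR : (0:ℝ) < b := by positivity
  have hbne : (b:ℝ) ≠ 0 := ne_of_gt hbR
  have habR : (a:ℝ) * b - e = t := by exact_mod_cast hab
  have hc0 : ((b:ℝ))^c ≠ 0 := by positivity
  have e1 : (t:ℝ) = ((a:ℝ) - (e:ℝ)/b) * b := by rw [← habR]; field_simp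
  have e2 : (t:ℝ) + b = ((a:ℝ) + ((b:ℝ)-(e:ℝ))/b) * b := by
    rw [← habR]; field_simp; ring
  have hlo : ((a:ℝ) - (e:ℝ)/b)/(b:ℝ)^c = (t:ℝ)/N := by
    rw [hNe, pow_succ, e1]; exact (mul_div_mul_right _ _ hbne).symm
  have hhi : ((a:ℝ) + ((b:ℝ)-(e:ℝ))/b)/(b:ℝ)^c = ((t:ℝ)+b)/N := by
    rw [hNe, pow_succ, e2]; exact (mul_div_mul_right _ _ hbne).symm
  exact ⟨a, e, ha, he, ⟨zu, by rw [hlo, hhi]; exact ⟨hu1, hu2⟩⟩,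
    ⟨zv, by rw [hlo, hhi]; exact ⟨hv1, hv2⟩⟩⟩

lemma key_ordered (b c : ℕ) (hb : 2 ≤ b) (u v : ℝ)
    (hu : u ∈ Set.Ico (0:ℝ) 1) (hv : v ∈ Set.Ico (0:ℝ) 1) (huv : u ≤ v)
    (h : min (v - u) (1 - (v - u)) < ((b:ℝ) - 1) / (b:ℝ)^(c+1)) :
    ∃ a e : ℕ, a < b ^ c ∧ e < b ∧
      (∃ z : ℤ, ((a:ℝ) - (e:ℝ)/b)/(b:ℝ)^c ≤ u + z ∧ u + z < ((a:ℝ) + ((b:ℝ)-(e:ℝ))/b)/(b:ℝ)^c) ∧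
      (∃ z : ℤ, ((a:ℝ) - (e:ℝ)/b)/(b:ℝ)^c ≤ v + z ∧ v + z < ((a:ℝ) + ((b:ℝ)-(e:ℝ))/b)/(b:ℝ)^c) := by
  have hbR : (2:ℝ) ≤ b := by exact_mod_cast hb
  set N : ℝ := (b:ℝ)^(c+1) with hN
  have hN0 : (0:ℝ) < N := by positivity
  have hNZ : ((((b:ℤ)^(c+1)):ℤ):ℝ) = N := by rw [hN]; push_cast; ring
  have hNb : (b:ℝ) ≤ N := by
    rw [hN]
    calc (b:ℝ) = (b:ℝ)^1 := (pow_one _).symm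
    _ ≤ (b:ℝ)^(c+1) := pow_le_pow_right₀ (by linarith) (by omega)
  have hNbZ : (b:ℤ) ≤ (b:ℤ)^(c+1) := by
    have : ((b:ℤ):ℝ) ≤ (((b:ℤ)^(c+1):ℤ):ℝ) := by rw [hNZ]; push_cast; exact hNb
    exact_mod_cast this
  have hsub : ∀ s : ℝ, (s - (b:ℝ)^(c+1))/N = s/N - 1 := by
    intro s
    rw [sub_div, show ((b:ℝ)^(c+1))/N = 1 from by rw [hN]; exact div_self (ne_of_gt hN0)]
  rcases min_lt_iff.mp h with h' | h'
  · -- short arc without wraparound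
    set t0 : ℤ := ⌊u * N⌋ with ht0
    have hf1 : (t0:ℝ) ≤ u * N := Int.floor_le _
    have hf2 : u * N < t0 + 1 := Int.lt_floor_add_one _
    have ht00 : 0 ≤ t0 := Int.floor_nonneg.mpr (by nlinarith [hu.1])
    have ht0N : t0 ≤ (b:ℤ)^(c+1) - 1 := by
      have h3 : u * N < N := by nlinarith [hu.2]
      have h4 : (t0:ℝ) < (((b:ℤ)^(c+1):ℤ):ℝ) := by rw [hNZ]; linarith
      have : t0 < (b:ℤ)^(c+1) := by exact_mod_cast h4
      omega
    have hu1 : (t0:ℝ)/N ≤ u := by rw [div_le_iff₀ hN0]; linarith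
    have hu2 : u < ((t0:ℝ)+1)/N := by rw [lt_div_iff₀ hN0]; linarith
    have hv1 : (t0:ℝ)/N ≤ v := le_trans hu1 huv
    have hv2 : v < ((t0:ℝ)+(b:ℝ))/N := by
      have h4 : (v-u)*N < (b:ℝ)-1 := (lt_div_iff₀ hN0).mp h'
      rw [lt_div_iff₀ hN0]; nlinarith
    have h5 : ((t0:ℝ)+1)/N ≤ ((t0:ℝ)+(b:ℝ))/N := by gcongr; linarith
    by_cases hcase : t0 ≤ (b:ℤ)^(c+1) - b
    · refine interval_of_t b c hb t0 N hN (by omega) hcase u v 0 0 ?_ ?_ ?_ ?_ <;> push_cast <;>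
        linarith
    · push_neg at hcase
      have e1 := hsub (t0:ℝ)
      have e2 : ((t0:ℝ) - (b:ℝ)^(c+1) + b)/N = ((t0:ℝ)+b)/N - 1 := by
        rw [show ((t0:ℝ) - (b:ℝ)^(c+1) + b) = ((t0:ℝ)+b) - (b:ℝ)^(c+1) from by ring, hsub]
      refine interval_of_t b c hb (t0 - (b:ℤ)^(c+1)) N hN (by omega) (by omega) u v (-1) (-1) ?_ ?_ ?_ ?_ <;>
        push_cast <;> simp only [e1, e2] <;> linarith
  · -- arc wraps around 0
    have h'' : 1 - (v - u) < ((b:ℝ)-1)/N := h'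
    set t0 : ℤ := ⌊v * N⌋ with ht0
    have hf1 : (t0:ℝ) ≤ v * N := Int.floor_le _
    have hf2 : v * N < t0 + 1 := Int.lt_floor_add_one _
    have ht00 : 0 ≤ t0 := Int.floor_nonneg.mpr (by nlinarith [hv.1])
    have ht0N : t0 ≤ (b:ℤ)^(c+1) - 1 := by
      have h3 : v * N < N := by nlinarith [hv.2]
      have h4 : (t0:ℝ) < (((b:ℤ)^(c+1):ℤ):ℝ) := by rw [hNZ]; linarith
      have : t0 < (b:ℤ)^(c+1) := by exact_mod_cast h4
      omega
    have hv1 : (t0:ℝ)/N ≤ v := by rw [div_le_iff₀ hN0]; linarith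
    have hv2 : v < ((t0:ℝ)+1)/N := by rw [lt_div_iff₀ hN0]; linarith
    have hu1 : (t0:ℝ)/N ≤ u + 1 := by
      have : v ≤ u + 1 := by linarith [hv.2, hu.1]
      linarith
    have hu2 : u + 1 < ((t0:ℝ)+(b:ℝ))/N := by
      have h4 : (1-(v-u))*N < (b:ℝ)-1 := (lt_div_iff₀ hN0).mp h''
      rw [lt_div_iff₀ hN0]; nlinarith
    have h5 : ((t0:ℝ)+1)/N ≤ ((t0:ℝ)+(b:ℝ))/N := by gcongr; linarith
    by_cases hcase : t0 ≤ (b:ℤ)^(c+1) - b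
    · refine interval_of_t b c hb t0 N hN (by omega) hcase u v 1 0 ?_ ?_ ?_ ?_ <;> push_cast <;>
        linarith
    · push_neg at hcase
      have e1 := hsub (t0:ℝ)
      have e2 : ((t0:ℝ) - (b:ℝ)^(c+1) + b)/N = ((t0:ℝ)+b)/N - 1 := by
        rw [show ((t0:ℝ) - (b:ℝ)^(c+1) + b) = ((t0:ℝ)+b) - (b:ℝ)^(c+1) from by ring, hsub]
      refine interval_of_t b c hb (t0 - (b:ℤ)^(c+1)) N hN (by omega) (by omega) u v 0 (-1) ?_ ?_ ?_ ?_ <;>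
        push_cast <;> simp only [e1, e2] <;> linarith

lemma key (b c : ℕ) (hb : 2 ≤ b) (u v : ℝ)
    (hu : u ∈ Set.Ico (0:ℝ) 1) (hv : v ∈ Set.Ico (0:ℝ) 1)
    (h : min |u - v| (1 - |u - v|) < ((b:ℝ) - 1) / (b:ℝ)^(c+1)) :
    ∃ a e : ℕ, a < b ^ c ∧ e < b ∧
      (∃ z : ℤ, ((a:ℝ) - (e:ℝ)/b)/(b:ℝ)^c ≤ u + z ∧ u + z < ((a:ℝ) + ((b:ℝ)-(e:ℝ))/b)/(b:ℝ)^c) ∧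
      (∃ z : ℤ, ((a:ℝ) - (e:ℝ)/b)/(b:ℝ)^c ≤ v + z ∧ v + z < ((a:ℝ) + ((b:ℝ)-(e:ℝ))/b)/(b:ℝ)^c) := by
  rcases le_total u v with hle | hle
  · have habs : |u - v| = v - u := by rw [abs_sub_comm]; exact abs_of_nonneg (by linarith)
    rw [habs] at h
    exact key_ordered b c hb u v hu hv hle h
  · have habs : |u - v| = u - v := abs_of_nonneg (by linarith)
    rw [habs] at h
    obtain ⟨a, e, ha, he, h1, h2⟩ := key_ordered b c hb v u hv hu hle h
    exact ⟨a, e, ha, he, h2, h1⟩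



/-- The toroidal `ℓ_∞` distance on `[0,1)^d`:
`‖x−y‖_{∞,T} = max_j min(|x_j−y_j|, 1−|x_j−y_j|)`. -/
noncomputable def tdist (d : ℕ) (x y : Fin d → ℝ) : ℝ :=
  ⨆ j : Fin d, min |x j - y j| (1 - |x j - y j|)

/-- A shifted toroidal `b`-adic elementary interval: the mod-1 reduction of
`∏_j [(a_j − e_j/b)/b^{c_j}, (a_j + (b−e_j)/b)/b^{c_j})`. -/
def torInterval (b d : ℕ) (c a e : Fin d → ℕ) : Set (Fin d → ℝ) :=
  {x | (∀ j, x j ∈ Set.Ico (0:ℝ) 1) ∧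
    ∀ j, ∃ z : ℤ, ((a j : ℝ) - (e j : ℝ) / b) / (b : ℝ) ^ c j ≤ x j + z ∧
      x j + z < ((a j : ℝ) + ((b : ℝ) - (e j : ℝ)) / b) / (b : ℝ) ^ c j}

/-- `P` is toroidally `κ`-separated in base `b`: there is `c` with `c_j ≤ κ` such that every
shifted toroidal elementary interval (with this `c`) contains at most one point of `P`. -/
def IsTorSeparated (b d κ : ℕ) (P : Finset (Fin d → ℝ)) : Prop :=
  ∃ c : Fin d → ℕ, (∀ j, c j ≤ κ) ∧
    ∀ a e : Fin d → ℕ, (∀ j, a j < b ^ c j) → (∀ j, e j < b) →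
      Set.Subsingleton (↑P ∩ torInterval b d c a e)

/-- If `P ⊆ [0,1)^d` is toroidally `κ`-separated in base `b` (with `b` prime), then for every
shift `δ ∈ [0,1)^d` the shifted set `P + δ = {x + δ mod 1 : x ∈ P}` satisfies
`q_{∞,T}(P + δ) ≥ (b−1)/(2b) · b^{−κ}`. -/
theorem stmt6 (b d κ : ℕ) (hb : b.Prime) (P : Finset (Fin d → ℝ))
    (hP : ∀ x ∈ P, ∀ j, x j ∈ Set.Ico (0:ℝ) 1)
    (hsep : IsTorSeparated b d κ P)
    (δ : Fin d → ℝ) (hδ : ∀ j, δ j ∈ Set.Ico (0:ℝ) 1) :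
    ∀ x ∈ P, ∀ y ∈ P,
      (fun j => Int.fract (x j + δ j)) ≠ (fun j => Int.fract (y j + δ j)) →
      ((b : ℝ) - 1) / (2 * b) * ((b : ℝ) ^ κ)⁻¹ ≤
        tdist d (fun j => Int.fract (x j + δ j)) (fun j => Int.fract (y j + δ j)) / 2 := by
  intro x hx y hy hne
  by_contra hcon
  push_neg at hcon
  obtain ⟨c, hcκ, hsub⟩ := hsep
  have hb2 : 2 ≤ b := hb.two_le
  have hbR : (2:ℝ) ≤ (b:ℝ) := by exact_mod_cast hb2
  have hbpos : (0:ℝ) < b := by linarith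
  -- the shifted points
  set gx : Fin d → ℝ := fun j => Int.fract (x j + δ j) with hgx
  set gy : Fin d → ℝ := fun j => Int.fract (y j + δ j) with hgy
  have htd : tdist d gx gy < ((b:ℝ) - 1) / (b:ℝ)^(κ+1) := by
    have heq : ((b:ℝ) - 1) / (2 * b) * ((b:ℝ)^κ)⁻¹ * 2 = ((b:ℝ) - 1) / (b:ℝ)^(κ+1) := by
      rw [pow_succ]
      field_simp
    linarith [hcon]
  have hcoord : ∀ j, min |x j - y j| (1 - |x j - y j|) < ((b:ℝ)-1)/(b:ℝ)^(c j + 1) := by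
    intro j
    have hinv : min |x j - y j| (1 - |x j - y j|) = min |gx j - gy j| (1 - |gx j - gy j|) := by
      refine circ_eq _ _ ?_ ?_ (⌊y j + δ j⌋ - ⌊x j + δ j⌋) ?_
      · constructor
        · have := (hP x hx j).1; have := (hP x hx j).2
          have := (hP y hy j).1; have := (hP y hy j).2
          linarith
        · have := (hP x hx j).1; have := (hP x hx j).2
          have := (hP y hy j).1; have := (hP y hy j).2
          linarith
      · constructor
        · have h1 := Int.fract_nonneg (x j + δ j)
          have h2 := Int.fract_lt_one (y j + δ j)
          simp only [hgx, hgy]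
          linarith
        · have h1 := Int.fract_lt_one (x j + δ j)
          have h2 := Int.fract_nonneg (y j + δ j)
          simp only [hgx, hgy]
          linarith
      · simp only [hgx, hgy, Int.fract]
        push_cast
        ring
    rw [hinv]
    have hle : min |gx j - gy j| (1 - |gx j - gy j|) ≤ tdist d gx gy := by
      exact le_ciSup (f := fun j => min |gx j - gy j| (1 - |gx j - gy j|))
        (Set.finite_range _).bddAbove j
    have hmono : ((b:ℝ) - 1) / (b:ℝ)^(κ+1) ≤ ((b:ℝ)-1)/(b:ℝ)^(c j + 1) := by
      have := hcκ j
      gcongr <;> first | linarith | omega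
    linarith
  choose a e ha he hxmem hymem using fun j =>
    key b (c j) hb2 (x j) (y j) (hP x hx j) (hP y hy j) (hcoord j)
  have hxI : x ∈ (↑P : Set (Fin d → ℝ)) ∩ torInterval b d c a e :=
    ⟨hx, hP x hx, hxmem⟩
  have hyI : y ∈ (↑P : Set (Fin d → ℝ)) ∩ torInterval b d c a e :=
    ⟨hy, hP y hy, hymem⟩
  have hxy : x = y := hsub a e ha he hxI hyI
  apply hne
  rw [hgx, hgy, hxy]
end

section
/- Let b be a prime, w ≥ 0 an integer, and m = (b−1)·b^w. Let P be the upper triangular Pascal matrix over F_b with P_{i,j} = C(j−1, i−1) mod b for j ≥ i and 0 otherwise. Then for any integer 1 ≤ i ≤ b^w − 1, the row sum satisfies Σ_{j=1}^m P_{i,j} ≡ 0 (mod b). -/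
lemma key_lucas (b : ℕ) (hb : b.Prime) :
    ∀ w i : ℕ, 1 ≤ i → i < b ^ w →
      Nat.choose ((b - 1) * b ^ w) i ≡ 0 [MOD b] := by
  haveI : Fact b.Prime := ⟨hb⟩
  intro w
  induction w with
  | zero => intro i h1 h2; simp at h2; omega
  | succ w ih =>
    intro i h1 h2
    have hbpos : 0 < b := hb.pos
    have hstep := Choose.choose_modEq_choose_mod_mul_choose_div_nat
      (p := b) (n := (b - 1) * b ^ (w + 1)) (k := i)
    have hm : (b - 1) * b ^ (w + 1) % b = 0 := by
      rw [pow_succ]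
      simp [Nat.mul_mod]
    have hd : (b - 1) * b ^ (w + 1) / b = (b - 1) * b ^ w := by
      rw [pow_succ, ← mul_assoc, Nat.mul_div_cancel _ hbpos]
    rw [hm, hd] at hstep
    rcases Nat.eq_zero_or_pos (i % b) with h0 | hpos
    · -- i % b = 0, so i / b ≥ 1 and i / b < b ^ w; use IH
      have hib : b ∣ i := Nat.dvd_of_mod_eq_zero h0
      have h1' : 1 ≤ i / b := Nat.one_le_div_iff hbpos |>.mpr (Nat.le_of_dvd (by omega) hib)
      have h2' : i / b < b ^ w := by
        rw [Nat.div_lt_iff_lt_mul hbpos, ← pow_succ]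
        exact h2
      have := ih (i / b) h1' h2'
      calc Nat.choose ((b - 1) * b ^ (w + 1)) i
          ≡ Nat.choose 0 (i % b) * Nat.choose ((b - 1) * b ^ w) (i / b) [MOD b] := hstep
        _ ≡ Nat.choose 0 (i % b) * 0 [MOD b] := Nat.ModEq.mul_left _ this
        _ = 0 := by ring
    · -- i % b ≥ 1, so choose 0 (i % b) = 0
      have : Nat.choose 0 (i % b) = 0 := Nat.choose_eq_zero_of_lt (by omega)
      rw [this, zero_mul] at hstep
      exact hstep

/-- For a prime `b`, `w ≥ 0`, `m = (b−1)·b^w` and `1 ≤ i ≤ b^w − 1`, the `i`-th row sum of the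
upper triangular Pascal matrix over `F_b` satisfies
`Σ_{j=1}^m P_{i,j} = Σ_{j=1}^m C(j−1, i−1) ≡ 0 (mod b)`. -/
theorem stmt11 (b w i : ℕ) (hb : b.Prime) (hi1 : 1 ≤ i) (hi2 : i ≤ b ^ w - 1) :
    (∑ j ∈ Finset.Icc 1 ((b - 1) * b ^ w), Nat.choose (j - 1) (i - 1)) ≡ 0 [MOD b] := by
  have hbpos : 0 < b := hb.pos
  have hpow : 1 ≤ b ^ w := Nat.one_le_pow _ _ hbpos
  set m := (b - 1) * b ^ w with hm
  -- reindex sum to t = j - 1 over range m, then restrict to Icc (i-1) (m-1)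
  have hsum : (∑ j ∈ Finset.Icc 1 m, Nat.choose (j - 1) (i - 1))
      = ∑ t ∈ Finset.range m, Nat.choose t (i - 1) := by
    rw [Finset.range_eq_Ico, ← Finset.Ico_add_one_right_eq_Icc]
    apply Finset.sum_nbij' (fun j => j - 1) (fun t => t + 1) <;>
      simp +contextual [Nat.lt_succ_iff] <;> omega
  rw [hsum]
  rcases Nat.eq_zero_or_pos m with hm0 | hmpos
  · simp [hm0, Nat.ModEq.refl]
  have hsum2 : (∑ t ∈ Finset.range m, Nat.choose t (i - 1))
      = ∑ t ∈ Finset.Icc (i - 1) (m - 1), Nat.choose t (i - 1) := by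
    symm
    apply Finset.sum_subset
    · intro t ht
      simp only [Finset.mem_Icc] at ht
      simp only [Finset.mem_range]
      omega
    · intro t ht ht2
      simp only [Finset.mem_Icc, not_and, not_le] at ht2
      simp only [Finset.mem_range] at ht
      exact Nat.choose_eq_zero_of_lt (by omega)
  rw [hsum2, Nat.sum_Icc_choose, show m - 1 + 1 = m by omega, show i - 1 + 1 = i by omega]
  exact key_lucas b hb w i hi1 (by omega)
end

section
/- Let b be a prime, w ≥ 0 an integer, m = (b−1)·b^w, and 2 ≤ k ≤ b−1, 1 ≤ i ≤ b^w integers. Let P^k denote the k-th power of the upper triangular Pascal matrix over F_b, whose entries satisfy (P^k)_{i,j} ≡ k^{j−i} C(j−1, i−1) (mod b) for j ≥ i and 0 otherwise. Then Σ_{j=1}^m (P^k)_{i,j} ≡ 0 (mod b). -/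
open Finset

/-- Lucas-type reduction: for a prime `p` and `t, r < p ^ w`,
`C(c·p^w + t, r) ≡ C(t, r) (mod p)`. -/
lemma lucas_chunk (p : ℕ) (hp : p.Prime) (w : ℕ) : ∀ c t r : ℕ, t < p ^ w → r < p ^ w →
    Nat.choose (c * p ^ w + t) r ≡ Nat.choose t r [MOD p] := by
  haveI : Fact p.Prime := ⟨hp⟩
  induction w with
  | zero =>
      intro c t r ht hr
      simp only [pow_zero, Nat.lt_one_iff] at ht hr
      subst ht; subst hr
      simp only [mul_one, Nat.add_zero, Nat.choose_zero_right]
      rfl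
  | succ w ih =>
      intro c t r ht hr
      have hp0 : 0 < p := hp.pos
      have hmod : (c * p ^ (w + 1) + t) % p = t % p := by
        rw [pow_succ, ← mul_assoc, Nat.add_comm, Nat.add_mul_mod_self_right]
      have hdiv : (c * p ^ (w + 1) + t) / p = c * p ^ w + t / p := by
        rw [pow_succ, ← mul_assoc, mul_comm (c * p ^ w) p, Nat.mul_add_div hp0]
      have htd : t / p < p ^ w := by
        rw [Nat.div_lt_iff_lt_mul hp0, ← pow_succ]; exact ht
      have hrd : r / p < p ^ w := by
        rw [Nat.div_lt_iff_lt_mul hp0, ← pow_succ]; exact hr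
      calc Nat.choose (c * p ^ (w + 1) + t) r
          ≡ Nat.choose ((c * p ^ (w + 1) + t) % p) (r % p) *
              Nat.choose ((c * p ^ (w + 1) + t) / p) (r / p) [MOD p] :=
            Choose.choose_modEq_choose_mod_mul_choose_div_nat
        _ = Nat.choose (t % p) (r % p) * Nat.choose (c * p ^ w + t / p) (r / p) := by
            rw [hmod, hdiv]
        _ ≡ Nat.choose (t % p) (r % p) * Nat.choose (t / p) (r / p) [MOD p] :=
            (ih c (t / p) (r / p) htd hrd).mul_left _
        _ ≡ Nat.choose t r [MOD p] :=
            Choose.choose_modEq_choose_mod_mul_choose_div_nat.symm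

/-- Splitting a sum over `range (m * n)` into a double sum. -/
lemma sum_range_mul_split {M : Type*} [AddCommMonoid M] (m n : ℕ) (f : ℕ → M) :
    ∑ j ∈ Finset.range (m * n), f j
      = ∑ c ∈ Finset.range m, ∑ t ∈ Finset.range n, f (c * n + t) := by
  induction m with
  | zero => simp
  | succ m ih =>
      rw [Nat.succ_mul, Finset.sum_range_add, ih, Finset.sum_range_succ]

/-- For a prime `b`, `w ≥ 0`, `m = (b−1)·b^w`, `2 ≤ k ≤ b−1` and `1 ≤ i ≤ b^w`, the `i`-th row
sum of the `k`-th power of the Pascal matrix over `F_b`, whose entries are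
`(P^k)_{i,j} ≡ k^{j−i} C(j−1, i−1) (mod b)` for `j ≥ i` (and `0` otherwise, automatically since
then `C(j−1,i−1) = 0`), satisfies `Σ_{j=1}^m (P^k)_{i,j} ≡ 0 (mod b)`. -/
theorem stmt12 (b w k i : ℕ) (hb : b.Prime) (hk : 2 ≤ k) (hk' : k ≤ b - 1)
    (hi : 1 ≤ i) (hi' : i ≤ b ^ w) :
    (∑ j ∈ Finset.Icc 1 ((b - 1) * b ^ w), k ^ (j - i) * Nat.choose (j - 1) (i - 1))
      ≡ 0 [MOD b] := by
  haveI : Fact b.Prime := ⟨hb⟩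
  have hb2 : 2 ≤ b := hb.two_le
  have hkb : k < b := lt_of_le_of_lt hk' (Nat.sub_lt hb.pos one_pos)
  set u : ZMod b := (k : ZMod b) with hu
  have hu0 : u ≠ 0 := by
    rw [hu, Ne, ZMod.natCast_eq_zero_iff]
    exact fun h => absurd (Nat.le_of_dvd (by omega) h) (by omega)
  have hu1 : u ≠ 1 := by
    intro h
    have : (k : ZMod b).val = (1 : ZMod b).val := by rw [← hu, h]
    rw [ZMod.val_cast_of_lt hkb, ZMod.val_one b] at this
    omega
  rw [Nat.modEq_zero_iff_dvd, ← ZMod.natCast_eq_zero_iff]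
  push_cast
  -- reindex Icc 1 m to range m
  rw [show Finset.Icc 1 ((b - 1) * b ^ w) = Finset.Ico 1 ((b - 1) * b ^ w + 1) by
        rw [Finset.Ico_add_one_right_eq_Icc],
      Finset.sum_Ico_eq_sum_range]
  simp only [Nat.add_sub_cancel, Nat.add_sub_cancel_left]
  rw [sum_range_mul_split]
  have key : ∀ c ∈ Finset.range (b - 1), ∀ t ∈ Finset.range (b ^ w),
      u ^ (1 + (c * b ^ w + t) - i) * ((c * b ^ w + t).choose (i - 1) : ZMod b)
        = u ^ (c * b ^ w) * (u ^ (1 + t - i) * ((t.choose (i - 1) : ZMod b))) := by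
    intro c _ t ht
    rw [Finset.mem_range] at ht
    have hlucas : ((c * b ^ w + t).choose (i - 1) : ZMod b) = (t.choose (i - 1) : ZMod b) := by
      have := lucas_chunk b hb w c t (i - 1) ht (by omega)
      exact (ZMod.natCast_eq_natCast_iff _ _ _).mpr this
    rw [hlucas]
    rcases lt_or_ge t (i - 1) with h | h
    · rw [Nat.choose_eq_zero_of_lt h]
      simp
    · have : 1 + (c * b ^ w + t) - i = c * b ^ w + (1 + t - i) := by omega
      rw [this, pow_add, mul_assoc]
  rw [Finset.sum_congr rfl (fun c hc => Finset.sum_congr rfl (key c hc))]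
  simp only [← Finset.mul_sum]
  rw [← Finset.sum_mul]
  have hgeom : ∑ c ∈ Finset.range (b - 1), u ^ (c * b ^ w) = 0 := by
    have hpow : ∀ c, u ^ (c * b ^ w) = u ^ c := by
      intro c
      rw [mul_comm, pow_mul, ZMod.pow_card_pow]
    simp only [hpow]
    have := geom_sum_eq hu1 (b - 1)
    rw [this, ZMod.pow_card_sub_one_eq_one hu0, sub_self, zero_div]
  rw [hgeom, zero_mul]
end

section
/- For every integer k ≥ 1, the Fibonacci polynomials over F_2 satisfy f_{2^k}(x) = x^{2^k − 1} and f_{2^k − 1}(x) = Σ_{ℓ=1}^k x^{2^k − 2^ℓ}. -/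
open Polynomial

/-- The Fibonacci polynomials over `F_2`: `f_0 = 0`, `f_1 = 1`, `f_2 = x`,
`f_{n+2} = x f_{n+1} + f_n`. -/
noncomputable def fib2 : ℕ → Polynomial (ZMod 2)
  | 0 => 0
  | 1 => 1
  | n + 2 => X * fib2 (n + 1) + fib2 n

lemma fib2_add (m : ℕ) : ∀ n, fib2 (m + n + 1) = fib2 (m + 1) * fib2 (n + 1) + fib2 m * fib2 n
  | 0 => by simp [fib2]
  | 1 => by simp [fib2]; ring
  | n + 2 => by
    have h1 := fib2_add m n
    have h2 := fib2_add m (n + 1)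
    have e3 : m + (n + 2) + 1 = (m + n + 1) + 2 := by ring
    have e2 : m + (n + 1) + 1 = (m + n + 1) + 1 := by ring
    rw [e3, show fib2 ((m+n+1)+2) = X * fib2 ((m+n+1)+1) + fib2 (m+n+1) from rfl,
      show (m+n+1)+1 = m+(n+1)+1 from by ring, h2, h1,
      show fib2 (n+1+1+1) = X * fib2 (n+1+1) + fib2 (n+1) from rfl,
      show fib2 (n+1+1) = X * fib2 (n+1) + fib2 n from rfl]
    ring

lemma char2 : (2 : Polynomial (ZMod 2)) = 0 := CharTwo.two_eq_zero

lemma fib2_two_mul (n : ℕ) (hn : 1 ≤ n) : fib2 (2 * n) = X * fib2 n ^ 2 := by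
  obtain ⟨m, rfl⟩ := Nat.exists_eq_add_of_le hn
  have h := fib2_add (1 + m) m
  rw [show 1 + m + m + 1 = 2 * (1 + m) from by ring] at h
  rw [h, show 1 + m + 1 = m + 2 from by ring,
    show fib2 (m + 2) = X * fib2 (m + 1) + fib2 m from rfl,
    show m + 1 = 1 + m from by ring]
  have : (2 : Polynomial (ZMod 2)) = 0 := char2
  ring_nf
  rw [this, mul_zero, add_zero]

lemma fib2_two_mul_sub_one (m : ℕ) :
    fib2 (2 * m + 1) = fib2 (m + 1) ^ 2 + fib2 m ^ 2 := by
  have h := fib2_add m m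
  rw [show m + m + 1 = 2 * m + 1 from by ring] at h
  rw [h]; ring

/-- For every `k ≥ 1`: `f_{2^k}(x) = x^{2^k − 1}` and
`f_{2^k − 1}(x) = Σ_{ℓ=1}^k x^{2^k − 2^ℓ}`. -/
theorem stmt14 (k : ℕ) (hk : 1 ≤ k) :
    fib2 (2 ^ k) = X ^ (2 ^ k - 1) ∧
    fib2 (2 ^ k - 1) = ∑ ℓ ∈ Finset.Icc 1 k, (X : Polynomial (ZMod 2)) ^ (2 ^ k - 2 ^ ℓ) := by
  induction k with
  | zero => omega
  | succ k ih =>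
    rcases Nat.eq_or_lt_of_le hk with h1 | h1
    · constructor
      · rw [← h1]
        show fib2 2 = X ^ 1
        simp [fib2]
      · rw [← h1]
        show fib2 1 = _
        simp [fib2]
    · have hk1 : 1 ≤ k := by omega
      obtain ⟨A, B⟩ := ih hk1
      have hle : 1 ≤ 2 ^ k := Nat.one_le_two_pow
      have hpow : 2 ^ (k + 1) = 2 * 2 ^ k := by rw [pow_succ]; ring
      constructor
      · rw [hpow, fib2_two_mul _ hle, A, ← pow_mul, ← pow_succ']
        congr 1
        omega
      · -- left side
        have hm : 2 ^ (k + 1) - 1 = 2 * (2 ^ k - 1) + 1 := by omega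
        rw [hm, fib2_two_mul_sub_one, show 2 ^ k - 1 + 1 = 2 ^ k from by omega, A, B,
          ← pow_mul, CharTwo.sum_sq]
        -- RHS reorganization
        have h1mem : (1 : ℕ) ∉ Finset.Icc 2 (k + 1) := by simp
        have hins : Finset.Icc 1 (k + 1) = insert 1 (Finset.Icc 2 (k + 1)) := by
          ext x; simp [Finset.mem_Icc]; omega
        rw [hins, Finset.sum_insert h1mem, pow_one]
        have hmap : Finset.Icc 2 (k + 1) = (Finset.Icc 1 k).map (addRightEmbedding 1) := by
          rw [Finset.map_add_right_Icc]
        rw [hmap, Finset.sum_map]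
        congr 1
        · congr 1; omega
        · apply Finset.sum_congr rfl
          intro ℓ hℓ
          simp only [addRightEmbedding_apply]
          rw [← pow_mul]
          congr 1
          have hℓk : ℓ ≤ k := (Finset.mem_Icc.mp hℓ).2
          have : 2 ^ ℓ ≤ 2 ^ k := Nat.pow_le_pow_right (by norm_num) hℓk
          rw [pow_succ 2 ℓ]
          omega
end

section
/- Let b be a prime, w ≥ 1, m = (b−1)b^w, and let (x_i)_{i ≥ 0} ⊂ [0,1)^b be the Faure (0,b)-sequence in base b, i.e., the digital sequence with generating matrices I, P, P^2, ..., P^{b−1}, where P is the upper triangular Pascal matrix over F_b. Then for n = b^m − b, the first coordinate of x_n equals 1/b − 1/b^m, and for each 2 ≤ k ≤ b−1, the k-th coordinate x_{n,k} satisfies 1/b ≤ x_{n,k} < 1/b + 1/b^{b^w − 1}. Consequently ‖x_1 − x_n‖_∞ ≤ b^{−(b^w − 1)}, and the separation radius of the first b^m points Q_{b^m} satisfies q_∞(Q_{b^m}) ≤ (b/2)·(b^m)^{−1/(b−1)}. -/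
/-- The upper triangular Pascal matrix over `F_b` (0-based): `P_{i,j} = C(j,i) mod b`. -/
def pascalB (b : ℕ) : ℕ → ℕ → ZMod b := fun i j => (Nat.choose j i : ZMod b)

/-- Product of two upper-triangular infinite matrices over `F_b`. -/
def upMul (b : ℕ) (A B : ℕ → ℕ → ZMod b) : ℕ → ℕ → ZMod b :=
  fun i j => ∑ l ∈ Finset.Icc i j, A i l * B l j

/-- The `k`-th power `P^k` of the Pascal matrix over `F_b` (with `P^0` the identity). -/
def pascalPow (b : ℕ) : ℕ → (ℕ → ℕ → ZMod b)
  | 0 => fun i j => if i = j then 1 else 0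
  | k + 1 => upMul b (pascalPow b k) (pascalB b)

open Polynomial Finset

lemma pascalPow_coeff (b k : ℕ) (i j : ℕ) :
    pascalPow b k i j = ((X + C (k : ZMod b)) ^ j).coeff i := by
  induction k generalizing i j with
  | zero =>
    simp only [pascalPow, Nat.cast_zero, map_zero, add_zero, coeff_X_pow]
  | succ k ih =>
    show upMul b (pascalPow b k) (pascalB b) i j = _
    have hbin : (X + C ((k + 1 : ℕ) : ZMod b)) ^ j
        = ∑ l ∈ range (j + 1), (X + C (k : ZMod b)) ^ l * C ((Nat.choose j l : ZMod b)) := by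
      have h1 : (X + C ((k + 1 : ℕ) : ZMod b)) = (X + C ((k : ℕ) : ZMod b)) + 1 := by
        push_cast
        rw [map_add, map_one]
        ring
      rw [h1, add_pow]
      refine Finset.sum_congr rfl fun l hl => ?_
      simp [C_eq_natCast]
    rw [hbin, finset_sum_coeff]
    unfold upMul
    simp_rw [ih i]
    have hsub : Finset.Icc i j ⊆ Finset.range (j + 1) := fun l hl => by
      simp only [Finset.mem_Icc] at hl; simp [Nat.lt_succ_of_le hl.2]
    rw [Finset.sum_subset hsub]
    · refine Finset.sum_congr rfl fun l _ => ?_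
      rw [coeff_mul_C]
      rfl
    · intro l hl hnot
      simp only [Finset.mem_range, Finset.mem_Icc, not_and, not_le] at hl hnot
      have hli : l < i := by omega
      rw [coeff_X_add_C_pow, Nat.choose_eq_zero_of_lt hli]
      simp [pascalB]

lemma pascalPow_eq (b k : ℕ) (i j : ℕ) :
    pascalPow b k i j = (k : ZMod b) ^ (j - i) * (Nat.choose j i : ZMod b) := by
  rw [pascalPow_coeff, coeff_X_add_C_pow]

lemma rowSum_zero (b : ℕ) (hb : b.Prime) (w k : ℕ) (hk0 : 1 ≤ k) (hk1 : k ≤ b - 1)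
    (i : ℕ) (hi : i + 2 ≤ b ^ w) :
    ∑ l ∈ Finset.range ((b - 1) * b ^ w), pascalPow b k i l = 0 := by
  haveI : Fact b.Prime := ⟨hb⟩
  have hb2 : 2 ≤ b := hb.two_le
  set K : ZMod b := (k : ZMod b) with hK
  set q := b ^ w with hq
  have hq0 : 0 < q := pow_pos hb.pos w
  set m := (b - 1) * q with hm
  set F : (ZMod b)[X] := ∑ l ∈ Finset.range m, (X + C K) ^ l with hF
  have hS : ∑ l ∈ Finset.range m, pascalPow b k i l = F.coeff i := by
    rw [hF, finset_sum_coeff]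
    exact Finset.sum_congr rfl fun l _ => pascalPow_coeff b k i l
  have hKne : K ≠ 0 := by
    rw [hK, Ne, ZMod.natCast_eq_zero_iff]
    intro hdvd
    have := Nat.le_of_dvd (by omega) hdvd
    omega
  have hfrob : (X + C K) ^ q = X ^ q + C K := by
    rw [hq, add_pow_char_pow]
    congr 1
    rw [← C_pow, ZMod.pow_card_pow]
  set G : (ZMod b)[X] := (X ^ q + C K) ^ (b - 1) - 1 with hG
  have hmain : F * (X + C (K - 1)) = G := by
    have hgeo := geom_sum_mul (X + C K) m
    have h1 : (X + C K) - 1 = X + C (K - 1) := by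
      rw [map_sub, map_one]; ring
    rw [h1] at hgeo
    rw [hgeo, hG]
    congr 1
    rw [hm, mul_comm (b - 1) q, pow_mul, hfrob]
  have hGcoeff : ∀ j, j < q → G.coeff j = 0 := by
    intro j hj
    have hexp : (X ^ q + C K) ^ (b - 1) = Polynomial.expand (ZMod b) q ((X + C K) ^ (b - 1)) := by
      rw [map_pow, map_add, expand_X, expand_C]
    rw [hG, coeff_sub, hexp, coeff_expand hq0]
    rcases Nat.eq_zero_or_pos j with hj0 | hj0
    · subst hj0
      rw [if_pos (dvd_zero q), Nat.zero_div, coeff_X_add_C_pow, Nat.sub_zero, Nat.choose_zero_right,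
        Nat.cast_one, mul_one, ZMod.pow_card_sub_one_eq_one hKne, coeff_one, if_pos rfl,
        sub_self]
    · have hnd : ¬ q ∣ j := fun hd => absurd (Nat.le_of_dvd hj0 hd) (not_le.mpr hj)
      rw [if_neg hnd, coeff_one, if_neg (by omega), sub_zero]
  rw [hS]
  rcases eq_or_ne (K - 1) 0 with hc | hc
  · -- k ≡ 1 : F * X = G
    have hFX : F * X = G := by rw [← hmain, hc, map_zero, add_zero]
    have : F.coeff i = (F * X).coeff (i + 1) := (coeff_mul_X F i).symm
    rw [this, hFX]
    exact hGcoeff (i + 1) (by omega)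
  · have key : ∀ j, j < q → F.coeff j = 0 := by
      intro j
      induction j with
      | zero =>
        intro h0
        have hg := hGcoeff 0 h0
        rw [← hmain, mul_coeff_zero, coeff_add, coeff_X_zero, coeff_C, if_pos rfl,
          zero_add] at hg
        exact (mul_eq_zero.mp hg).resolve_right hc
      | succ j ihj =>
        intro hjq
        have hg := hGcoeff (j + 1) hjq
        rw [← hmain, mul_add, coeff_add, coeff_mul_X, coeff_mul_C,
          ihj (by omega), zero_add] at hg
        exact (mul_eq_zero.mp hg).resolve_right hc
    exact key i (by omega)

lemma digits_pow_sub_one (b : ℕ) (hb : 2 ≤ b) :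
    ∀ t, Nat.digits b (b ^ t - 1) = List.replicate t (b - 1) := by
  intro t
  induction t with
  | zero => simp
  | succ t ih =>
    have hbt : 1 ≤ b ^ t := Nat.one_le_pow _ _ (by omega)
    have hbt' : b ≤ b ^ t * b := Nat.le_mul_of_pos_left b hbt
    have hkey : b ^ (t + 1) - 1 = (b - 1) + (b ^ t - 1) * b := by
      rw [pow_succ, Nat.sub_mul]
      omega
    have hpos : 0 < b ^ (t + 1) - 1 := by
      rw [pow_succ]; omega
    rw [Nat.digits_def' (by omega : 1 < b) hpos, hkey]
    rw [Nat.add_mul_mod_self_right, Nat.add_mul_div_right _ _ (by omega : 0 < b),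
      Nat.mod_eq_of_lt (by omega), Nat.div_eq_of_lt (by omega)]
    rw [Nat.zero_add, ih]
    rfl

lemma digits_n (b m : ℕ) (hb : 2 ≤ b) (hm : 2 ≤ m) :
    Nat.digits b (b ^ m - b) = 0 :: List.replicate (m - 1) (b - 1) := by
  have h1 : 1 ≤ b ^ (m - 1) := Nat.one_le_pow _ _ (by omega)
  have hkey : b ^ m - b = (b ^ (m - 1) - 1) * b := by
    rw [Nat.sub_mul, one_mul]
    congr 1
    rw [← pow_succ]
    congr 1
    omega
  have hb2 : b ^ (m - 1) ≥ b := Nat.le_self_pow (by omega) b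
  have hbb : b * b ≤ b ^ (m - 1) * b := Nat.mul_le_mul_right b hb2
  have hpos : 0 < b ^ m - b := by
    rw [hkey]
    have : 2 ≤ b ^ (m - 1) := le_trans hb hb2
    have : 1 ≤ b ^ (m - 1) - 1 := by omega
    calc 0 < 1 * b := by omega
    _ ≤ (b ^ (m - 1) - 1) * b := Nat.mul_le_mul_right b this
  rw [Nat.digits_def' (by omega : 1 < b) hpos, hkey, Nat.mul_mod_left,
    Nat.mul_div_cancel _ (by omega : 0 < b), digits_pow_sub_one b hb]

lemma geom_tail (b : ℕ) (hb : 2 ≤ b) (s : ℕ) :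
    ∀ t, s ≤ t → ∑ i ∈ Finset.Ico s t, ((b : ℝ) - 1) / (b : ℝ) ^ (i + 1)
      = 1 / (b : ℝ) ^ s - 1 / (b : ℝ) ^ t := by
  intro t
  induction t with
  | zero => intro h; interval_cases s; simp
  | succ t ih =>
    intro h
    have hb0 : (0 : ℝ) < (b : ℝ) := by positivity
    rcases Nat.eq_or_lt_of_le h with h1 | h2
    · subst h1; simp
    · have hst : s ≤ t := by omega
      rw [Finset.sum_Ico_succ_top hst, ih hst]
      have hbt : (0 : ℝ) < (b : ℝ) ^ t := by positivity
      field_simp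
      ring

/-- Coordinate of the `n`-th point of a digital sequence over `F_b` with generating matrix `C`. -/
noncomputable def dsCoordB (b : ℕ) (C : ℕ → ℕ → ZMod b) (n : ℕ) : ℝ :=
  ∑' i : ℕ,
    ((∑ l ∈ Finset.range (Nat.digits b n).length,
        C i l * ((Nat.digits b n).getD l 0 : ZMod b)).val : ℝ) / (b : ℝ) ^ (i + 1)

/-- For a prime `b`, `w ≥ 1` and `m = (b−1)b^w`, consider the Faure `(0,b)`-sequence in base
`b`, i.e. the digital sequence with generating matrices `I, P, P², …, P^{b−1}`. For
`n = b^m − b`: the first coordinate of `x_n` equals `1/b − 1/b^m`; for `2 ≤ k ≤ b−1` the `k`-th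
coordinate satisfies `1/b ≤ x_{n,k} < 1/b + 1/b^{b^w−1}`; consequently
`‖x_1 − x_n‖_∞ ≤ b^{−(b^w−1)}` and `q_∞(Q_{b^m}) ≤ (b/2)·(b^m)^{−1/(b−1)}`. -/
theorem stmt17 (b : ℕ) (hb : b.Prime) (w : ℕ) (hw : 1 ≤ w) :
    ∀ m n : ℕ, m = (b - 1) * b ^ w → n = b ^ m - b →
    ∀ pt : ℕ → Fin b → ℝ, (pt = fun a (j : Fin b) => dsCoordB b (pascalPow b (j : ℕ)) a) →
    pt n ⟨0, hb.pos⟩ = 1 / b - 1 / (b : ℝ) ^ m ∧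
    (∀ j : Fin b, 1 ≤ (j : ℕ) → (j : ℕ) ≤ b - 2 →
      1 / (b : ℝ) ≤ pt n j ∧ pt n j < 1 / b + 1 / (b : ℝ) ^ (b ^ w - 1)) ∧
    dist (pt 1) (pt n) ≤ ((b : ℝ) ^ (b ^ w - 1))⁻¹ ∧
    sInf {r : ℝ | ∃ a < b ^ m, ∃ c < b ^ m, pt a ≠ pt c ∧ r = dist (pt a) (pt c) / 2}
      ≤ ((b : ℝ) / 2) * (((b : ℝ) ^ m) ^ (-(1 : ℝ) / ((b : ℝ) - 1))) := by
  intro m n hm hn pt hpt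
  subst hpt
  haveI : Fact b.Prime := ⟨hb⟩
  haveI : Fact (1 < b) := ⟨hb.one_lt⟩
  haveI : NeZero b := ⟨hb.pos.ne'⟩
  have hb2 : 2 ≤ b := hb.two_le
  have hbR : (2 : ℝ) ≤ (b : ℝ) := by exact_mod_cast hb2
  have hbR0 : (0 : ℝ) < (b : ℝ) := by linarith
  set q := b ^ w with hq
  have hq2 : 2 ≤ q := le_trans hb2 (Nat.le_self_pow (by omega) b)
  have hqm : q ≤ m := by
    rw [hm]
    calc q = 1 * q := (one_mul q).symm
    _ ≤ (b - 1) * q := Nat.mul_le_mul_right q (by omega)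
  have hm2 : 2 ≤ m := le_trans hq2 hqm
  -- digits of n
  have hd : Nat.digits b n = 0 :: List.replicate (m - 1) (b - 1) := by
    rw [hn]; exact digits_n b m hb2 hm2
  have hlen : (Nat.digits b n).length = m := by
    rw [hd]; simp; omega
  have hget : ∀ l, (Nat.digits b n).getD l 0
      = if l = 0 then 0 else if l < m then b - 1 else 0 := by
    intro l
    rw [hd]
    match l with
    | 0 => simp
    | (l + 1) =>
      rcases lt_or_ge (l + 1) m with h | h
      · rw [List.getD_eq_getElem _ _ (by simp; omega)]
        simp only [List.getElem_cons_succ, List.getElem_replicate]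
        rw [if_neg (by omega), if_pos h]
      · rw [List.getD_eq_default _ _ (by simp; omega)]
        rw [if_neg (by omega), if_neg (by omega)]
  have hP0 : ∀ kk i, pascalPow b kk i 0 = if i = 0 then 1 else 0 := by
    intro kk i
    rw [pascalPow_eq]
    cases i with
    | zero => simp
    | succ i => simp
  have htri : ∀ kk i l, l < i → pascalPow b kk i l = 0 := by
    intro kk i l h
    rw [pascalPow_eq, Nat.choose_eq_zero_of_lt h, Nat.cast_zero, mul_zero]
  set T : ℕ → ℕ → ZMod b :=
    fun kk i => pascalPow b kk i 0 - ∑ l ∈ Finset.range m, pascalPow b kk i l with hT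
  have hinner : ∀ kk i, (∑ l ∈ Finset.range (Nat.digits b n).length,
      pascalPow b kk i l * ((Nat.digits b n).getD l 0 : ZMod b)) = T kk i := by
    intro kk i
    rw [hlen]
    have hstep : ∀ l ∈ Finset.range m,
        pascalPow b kk i l * ((Nat.digits b n).getD l 0 : ZMod b)
        = (if l = 0 then pascalPow b kk i l else 0) + pascalPow b kk i l * (-1) := by
      intro l hl
      rw [Finset.mem_range] at hl
      rw [hget l]
      rcases eq_or_ne l 0 with rfl | h0
      · simp
      · rw [if_neg h0, if_pos hl, if_neg h0]
        have hc : ((b - 1 : ℕ) : ZMod b) = -1 := by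
          rw [Nat.cast_sub (by omega), ZMod.natCast_self, Nat.cast_one, zero_sub]
        rw [hc, zero_add]
    rw [Finset.sum_congr rfl hstep, Finset.sum_add_distrib,
      Finset.sum_ite_eq' (Finset.range m) 0 (fun l => pascalPow b kk i l),
      if_pos (Finset.mem_range.mpr (by omega))]
    simp only [hT, mul_neg_one, Finset.sum_neg_distrib]
    ring
  have hTbig : ∀ kk i, m ≤ i → T kk i = 0 := by
    intro kk i hi
    simp only [hT]
    rw [hP0, if_neg (by omega),
      Finset.sum_eq_zero (fun l hl => htri kk i l (by rw [Finset.mem_range] at hl; omega))]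
    ring
  have hdsc : ∀ kk, dsCoordB b (pascalPow b kk) n
      = ∑ i ∈ Finset.range m, ((T kk i).val : ℝ) / (b : ℝ) ^ (i + 1) := by
    intro kk
    unfold dsCoordB
    simp_rw [hinner kk]
    refine tsum_eq_sum ?_
    intro i hi
    rw [Finset.mem_range, not_lt] at hi
    rw [hTbig kk i hi, ZMod.val_zero]
    simp
  -- coordinate 0
  have hcoord0 : dsCoordB b (pascalPow b 0) n = 1 / (b : ℝ) - 1 / (b : ℝ) ^ m := by
    rw [hdsc 0]
    have hTval : ∀ i ∈ Finset.range m, ((T 0 i).val : ℝ) / (b : ℝ) ^ (i + 1)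
        = if i = 0 then 0 else ((b : ℝ) - 1) / (b : ℝ) ^ (i + 1) := by
      intro i hi
      rw [Finset.mem_range] at hi
      have hid : ∀ l, pascalPow b 0 i l = if l = i then 1 else 0 := by
        intro l
        show (if i = l then 1 else 0) = _
        simp [eq_comm]
      have hsum : ∑ l ∈ Finset.range m, pascalPow b 0 i l = 1 := by
        rw [Finset.sum_congr rfl (fun l _ => hid l),
          Finset.sum_ite_eq' (Finset.range m) i (fun _ => (1 : ZMod b)),
          if_pos (Finset.mem_range.mpr hi)]
      rcases eq_or_ne i 0 with rfl | h0
      · rw [if_pos rfl]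
        have hz : T 0 0 = 0 := by
          simp only [hT]
          rw [hP0, if_pos rfl, hsum, sub_self]
        rw [hz, ZMod.val_zero]
        simp
      · rw [if_neg h0]
        have hneg : T 0 i = -1 := by
          simp only [hT]
          rw [hP0, if_neg h0, hsum]
          ring
        have hval : ((-1 : ZMod b)).val = b - 1 := by
          have hcast : (-1 : ZMod b) = ((b - 1 : ℕ) : ZMod b) := by
            rw [Nat.cast_sub (by omega), ZMod.natCast_self, Nat.cast_one, zero_sub]
          rw [hcast, ZMod.val_cast_of_lt (by omega)]
        rw [hneg, hval]
        congr 1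
        push_cast [Nat.cast_sub (by omega : 1 ≤ b)]
        ring
    rw [Finset.sum_congr rfl hTval, Finset.range_eq_Ico,
      Finset.sum_eq_sum_Ico_succ_bot (by omega : 0 < m), if_pos rfl, zero_add,
      Finset.sum_congr rfl (fun i hi => if_neg (by rw [Finset.mem_Ico] at hi; omega)),
      geom_tail b hb2 1 m (by omega)]
    norm_num
  -- coordinates 1 .. b-1
  have hbound : ∀ kk, 1 ≤ kk → kk ≤ b - 1 →
      1 / (b : ℝ) ≤ dsCoordB b (pascalPow b kk) n ∧
      dsCoordB b (pascalPow b kk) n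
        ≤ 1 / (b : ℝ) + (1 / (b : ℝ) ^ (q - 1) - 1 / (b : ℝ) ^ m) := by
    intro kk h1 h2
    have hrow : ∀ i, i + 2 ≤ q → ∑ l ∈ Finset.range m, pascalPow b kk i l = 0 := by
      intro i hi
      rw [hm]
      exact rowSum_zero b hb w kk h1 h2 i hi
    have hT0 : T kk 0 = 1 := by
      simp only [hT]
      rw [hP0, if_pos rfl, hrow 0 (by omega), sub_zero]
    have hTmid : ∀ i, 1 ≤ i → i + 2 ≤ q → T kk i = 0 := by
      intro i hi1 hi2
      simp only [hT]
      rw [hP0, if_neg (by omega), hrow i hi2, sub_zero]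
    rw [hdsc kk, Finset.range_eq_Ico, Finset.sum_eq_sum_Ico_succ_bot (by omega : 0 < m), hT0]
    have hv1 : (((1 : ZMod b)).val : ℝ) = 1 := by
      rw [ZMod.val_one b]
      norm_num
    rw [hv1]
    have hfirst : (1 : ℝ) / (b : ℝ) ^ (0 + 1) = 1 / (b : ℝ) := by norm_num
    rw [hfirst]
    have htail0 : (0 : ℝ) ≤ ∑ i ∈ Finset.Ico 1 m, ((T kk i).val : ℝ) / (b : ℝ) ^ (i + 1) :=
      Finset.sum_nonneg (fun i _ => by positivity)
    constructor
    · linarith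
    · have hsplit : ∑ i ∈ Finset.Ico 1 m, ((T kk i).val : ℝ) / (b : ℝ) ^ (i + 1)
          = ∑ i ∈ Finset.Ico 1 (q - 1), ((T kk i).val : ℝ) / (b : ℝ) ^ (i + 1)
            + ∑ i ∈ Finset.Ico (q - 1) m, ((T kk i).val : ℝ) / (b : ℝ) ^ (i + 1) :=
        (Finset.sum_Ico_consecutive _ (by omega) (by omega)).symm
      have hz : ∑ i ∈ Finset.Ico 1 (q - 1), ((T kk i).val : ℝ) / (b : ℝ) ^ (i + 1) = 0 := by
        refine Finset.sum_eq_zero fun i hi => ?_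
        rw [Finset.mem_Ico] at hi
        rw [hTmid i hi.1 (by omega), ZMod.val_zero]
        simp
      have hup : ∑ i ∈ Finset.Ico (q - 1) m, ((T kk i).val : ℝ) / (b : ℝ) ^ (i + 1)
          ≤ ∑ i ∈ Finset.Ico (q - 1) m, ((b : ℝ) - 1) / (b : ℝ) ^ (i + 1) := by
        refine Finset.sum_le_sum fun i _ => ?_
        have hvl : (T kk i).val ≤ b - 1 := by
          have := ZMod.val_lt (T kk i)
          omega
        have hvlR : ((T kk i).val : ℝ) ≤ (b : ℝ) - 1 := by
          have : ((T kk i).val : ℝ) ≤ ((b - 1 : ℕ) : ℝ) := by exact_mod_cast hvl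
          rw [Nat.cast_sub (by omega)] at this
          simpa using this
        gcongr
      rw [hsplit, hz, zero_add]
      rw [geom_tail b hb2 (q - 1) m (by omega)] at hup
      linarith
  -- the point x_1
  have hpt1 : ∀ kk : ℕ, dsCoordB b (pascalPow b kk) 1 = 1 / (b : ℝ) := by
    intro kk
    unfold dsCoordB
    have hd1 : Nat.digits b 1 = [1] := by
      rw [Nat.digits_def' (by omega : 1 < b) one_pos, Nat.mod_eq_of_lt (by omega),
        Nat.div_eq_of_lt (by omega), Nat.digits_zero]
    rw [hd1]
    have hin : ∀ i : ℕ, (∑ l ∈ Finset.range ([1].length),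
        pascalPow b kk i l * (([1].getD l 0 : ℕ) : ZMod b)) = if i = 0 then 1 else 0 := by
      intro i
      simp [hP0 kk i]
    rw [tsum_congr (fun i => by rw [hin i])]
    rw [tsum_eq_sum (s := Finset.range 1) (by
      intro i hi
      rw [Finset.mem_range, not_lt] at hi
      rw [if_neg (by omega), ZMod.val_zero]
      simp)]
    rw [Finset.sum_range_one, if_pos rfl]
    have hv1 : (((1 : ZMod b)).val : ℝ) = 1 := by
      rw [ZMod.val_one b]; norm_num
    rw [hv1]
    norm_num
  -- powers comparisons
  have hpowle : (b : ℝ) ^ (q - 1) ≤ (b : ℝ) ^ m :=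
    pow_le_pow_right₀ (by linarith) (by omega)
  have hpm0 : (0 : ℝ) < (b : ℝ) ^ m := by positivity
  have hpq0 : (0 : ℝ) < (b : ℝ) ^ (q - 1) := by positivity
  have hdist3 : dist (fun (j : Fin b) => dsCoordB b (pascalPow b (j : ℕ)) 1)
      (fun (j : Fin b) => dsCoordB b (pascalPow b (j : ℕ)) n) ≤ ((b : ℝ) ^ (q - 1))⁻¹ := by
    rw [dist_pi_le_iff (by positivity)]
    intro j
    show dist (dsCoordB b (pascalPow b (j : ℕ)) 1) (dsCoordB b (pascalPow b (j : ℕ)) n) ≤ _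
    rw [hpt1, Real.dist_eq]
    have hqinv : ((b : ℝ) ^ (q - 1))⁻¹ = 1 / (b : ℝ) ^ (q - 1) := (one_div _).symm
    rcases Nat.eq_zero_or_pos (j : ℕ) with hj0 | hj0
    · rw [hj0, hcoord0]
      have : (1 : ℝ) / b - (1 / (b : ℝ) - 1 / (b : ℝ) ^ m) = 1 / (b : ℝ) ^ m := by ring
      rw [this, abs_of_nonneg (by positivity), hqinv]
      exact one_div_le_one_div_of_le hpq0 hpowle
    · have hB := hbound (j : ℕ) hj0 (by have := j.isLt; omega)
      rw [hqinv, abs_le]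
      constructor
      · have : (0:ℝ) < 1 / (b:ℝ) ^ m := by positivity
        have h1q : (0:ℝ) < 1 / (b:ℝ) ^ (q-1) := by positivity
        linarith [hB.2]
      · linarith [hB.1, le_of_lt (by positivity : (0:ℝ) < 1 / (b:ℝ) ^ (q-1))]
  refine ⟨?_, ?_, ?_, ?_⟩
  · show dsCoordB b (pascalPow b ((0 : ℕ))) n = _
    exact hcoord0
  · intro j hj1 hj2
    have hb3 : 3 ≤ b := by omega
    have hB := hbound (j : ℕ) hj1 (by omega)
    refine ⟨hB.1, lt_of_le_of_lt hB.2 ?_⟩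
    have : (0:ℝ) < 1 / (b:ℝ) ^ m := by positivity
    linarith
  · exact hdist3
  · -- separation radius
    have hnlt : n < b ^ m := by
      rw [hn]
      have : b ≤ b ^ m := Nat.le_self_pow (by omega) b
      omega
    have h1lt : 1 < b ^ m := Nat.one_lt_pow (by omega) (by omega)
    have hne : (fun (j : Fin b) => dsCoordB b (pascalPow b (j : ℕ)) 1)
        ≠ (fun (j : Fin b) => dsCoordB b (pascalPow b (j : ℕ)) n) := by
      intro hcontra
      have := congrFun hcontra ⟨0, hb.pos⟩
      simp only at this
      rw [hpt1, hcoord0] at this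
      have : (1:ℝ) / (b:ℝ) ^ m = 0 := by linarith
      have : (0:ℝ) < 1 / (b:ℝ) ^ m := by positivity
      linarith
    have hmem : dist (fun (j : Fin b) => dsCoordB b (pascalPow b (j : ℕ)) 1)
        (fun (j : Fin b) => dsCoordB b (pascalPow b (j : ℕ)) n) / 2
        ∈ {r : ℝ | ∃ a < b ^ m, ∃ c < b ^ m,
            (fun a (j : Fin b) => dsCoordB b (pascalPow b (j : ℕ)) a) a
              ≠ (fun a (j : Fin b) => dsCoordB b (pascalPow b (j : ℕ)) a) c ∧
            r = dist ((fun a (j : Fin b) => dsCoordB b (pascalPow b (j : ℕ)) a) a)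
              ((fun a (j : Fin b) => dsCoordB b (pascalPow b (j : ℕ)) a) c) / 2} := by
      exact ⟨1, h1lt, n, hnlt, hne, rfl⟩
    have hbdd : BddBelow {r : ℝ | ∃ a < b ^ m, ∃ c < b ^ m,
        (fun a (j : Fin b) => dsCoordB b (pascalPow b (j : ℕ)) a) a
          ≠ (fun a (j : Fin b) => dsCoordB b (pascalPow b (j : ℕ)) a) c ∧
        r = dist ((fun a (j : Fin b) => dsCoordB b (pascalPow b (j : ℕ)) a) a)
          ((fun a (j : Fin b) => dsCoordB b (pascalPow b (j : ℕ)) a) c) / 2} := by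
      refine ⟨0, fun r hr => ?_⟩
      obtain ⟨a, _, c, _, _, hr⟩ := hr
      rw [hr]
      positivity
    have hinf := csInf_le hbdd hmem
    have hdistle := hdist3
    have hrhs : ((b : ℝ) / 2) * (((b : ℝ) ^ m) ^ (-(1 : ℝ) / ((b : ℝ) - 1)))
        = ((b : ℝ) ^ (q - 1))⁻¹ / 2 := by
      have hbne : ((b : ℝ) - 1) ≠ 0 := by linarith
      have hmcast : ((m : ℕ) : ℝ) = ((b : ℝ) - 1) * ((q : ℕ) : ℝ) := by
        rw [hm]
        push_cast [Nat.cast_sub (by omega : 1 ≤ b)]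
        ring
      have h2 : (((b : ℝ) ^ m) ^ (-(1 : ℝ) / ((b : ℝ) - 1))) = (b : ℝ) ^ (-((q : ℕ) : ℝ)) := by
        rw [← Real.rpow_natCast (b : ℝ) m, ← Real.rpow_mul (le_of_lt hbR0)]
        congr 1
        rw [hmcast]
        field_simp
      rw [h2, Real.rpow_neg (le_of_lt hbR0), Real.rpow_natCast]
      have hq1 : (b : ℝ) ^ q = (b : ℝ) ^ (q - 1) * b := by
        rw [← pow_succ]
        congr 1
        omega
      rw [hq1]
      have hb0' : (b : ℝ) ≠ 0 := by linarith
      have hbq' : (b : ℝ) ^ (q - 1) ≠ 0 := by positivity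
      field_simp
    rw [hrhs]
    calc sInf _ ≤ _ := hinf
    _ ≤ ((b : ℝ) ^ (q - 1))⁻¹ / 2 := by linarith [hdistle]
end

section
/- Let b be a prime and m ≥ 1. The digitally shifted Larcher–Pillichshammer net Q(F_1, F_2) ⊕ δ over F_b, for any digital shift δ ∈ {0, 1/b^m, ..., (b^m−1)/b^m}^2, is (⌈m/2⌉ + 1)-separated and toroidally (⌈m/2⌉ + 1)-separated in base b. Consequently its separation radius satisfies q_∞(Q(F_1,F_2) ⊕ δ) ≥ (b−1)/(2b) · b^{−⌈m/2⌉−1}. -/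
/-- The vector of the first `m` base-`b` digits of `n`. -/
def digitVec (b m : ℕ) (n : ℕ) : Fin m → ZMod b :=
  fun i => ((Nat.digits b n).getD i 0 : ZMod b)

/-- Coordinate of the `n`-th point of a digitally shifted digital net with generating
matrix `F` and digit vector `δ` of the shift: `x = Σ_{k=1}^m ((F n⃗ + δ)_k)/b^k`. -/
noncomputable def netCoordShift (b m : ℕ) (F : Matrix (Fin m) (Fin m) (ZMod b))
    (δ : Fin m → ZMod b) (n : ℕ) : ℝ :=
  ∑ k : Fin m, ((F.mulVec (digitVec b m n) + δ) k).val / (b : ℝ) ^ ((k : ℕ) + 1)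

/-- Second generating matrix of the Larcher–Pillichshammer net:
`(F₂)_{i,j} = 1` if `i + j ≤ m + 1` (1-based) and `0` otherwise. -/
def lpF2 (b m : ℕ) : Matrix (Fin m) (Fin m) (ZMod b) :=
  Matrix.of fun i j => if (i : ℕ) + (j : ℕ) + 2 ≤ m + 1 then 1 else 0


namespace Stmt18Aux

variable {b m : ℕ}


lemma geomZ (c : ℕ) : ∑ k ∈ Finset.range (c+1), ((b:ℤ)-1) * (b:ℤ)^(c-k)
    = (b:ℤ)^(c+1) - 1 := by
  have h := Finset.sum_range_reflect (fun j => ((b:ℤ)-1)*(b:ℤ)^j) (c+1)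
  simp only [Nat.add_sub_cancel] at h
  rw [h, ← Finset.mul_sum, mul_comm, geom_sum_mul]

lemma absSum (hb : 2 ≤ b) (w : ℕ → ℤ) (hw : ∀ k, |w k| ≤ (b:ℤ)-1) (c : ℕ) :
    |∑ k ∈ Finset.range (c+1), w k * (b:ℤ)^(c-k)| ≤ (b:ℤ)^(c+1) - 1 := by
  have hb' : (1:ℤ) ≤ (b:ℤ) := by exact_mod_cast Nat.one_le_of_lt hb
  calc |∑ k ∈ Finset.range (c+1), w k * (b:ℤ)^(c-k)|
      ≤ ∑ k ∈ Finset.range (c+1), |w k * (b:ℤ)^(c-k)| := Finset.abs_sum_le_sum_abs _ _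
    _ ≤ ∑ k ∈ Finset.range (c+1), ((b:ℤ)-1) * (b:ℤ)^(c-k) := by
        refine Finset.sum_le_sum fun k _ => ?_
        rw [abs_mul, abs_pow, abs_of_nonneg (by linarith : (0:ℤ) ≤ (b:ℤ))]
        exact mul_le_mul_of_nonneg_right (hw k) (by positivity)
    _ = (b:ℤ)^(c+1) - 1 := geomZ c

lemma peelLast (w : ℕ → ℤ) (c : ℕ) :
    ∑ k ∈ Finset.range (c+2), w k * (b:ℤ)^(c+1-k)
    = (b:ℤ) * (∑ k ∈ Finset.range (c+1), w k * (b:ℤ)^(c-k)) + w (c+1) := by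
  rw [Finset.sum_range_succ, Finset.mul_sum]
  simp only [Nat.sub_self, pow_zero, mul_one]
  congr 1
  refine Finset.sum_congr rfl fun k hk => ?_
  rw [Finset.mem_range] at hk
  rw [show c+1-k = (c-k)+1 by omega, pow_succ]
  ring

lemma dvd_small_zero (hb : 2 ≤ b) {x : ℤ} (h : (b:ℤ) ∣ x) (hx : |x| ≤ (b:ℤ)-1) : x = 0 := by
  rcases h with ⟨t, rfl⟩
  rcases eq_or_ne t 0 with rfl | ht
  · ring
  · exfalso
    have h1 : (1:ℤ) ≤ |t| := Int.one_le_abs (by exact_mod_cast ht)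
    have h2 : (0:ℤ) < b := by exact_mod_cast Nat.lt_of_lt_of_le Nat.zero_lt_two hb
    rw [abs_mul, abs_of_nonneg h2.le] at hx
    nlinarith

lemma zeroLemma (hb : 2 ≤ b) (w : ℕ → ℤ) (hw : ∀ k, |w k| ≤ (b:ℤ)-1) :
    ∀ c, (∑ k ∈ Finset.range (c+1), w k * (b:ℤ)^(c-k)) = 0 → ∀ k ≤ c, w k = 0 := by
  intro c
  induction c with
  | zero => intro h k hk; interval_cases k; simpa using h
  | succ c ih =>
    intro h k hk
    rw [peelLast] at h
    have hlast : w (c+1) = 0 := by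
      refine dvd_small_zero hb ⟨-(∑ k ∈ Finset.range (c+1), w k * (b:ℤ)^(c-k)), ?_⟩ (hw _)
      linarith
    have hT : (∑ k ∈ Finset.range (c+1), w k * (b:ℤ)^(c-k)) = 0 := by
      have hb0 : (b:ℤ) ≠ 0 := by positivity
      have : (b:ℤ) * (∑ k ∈ Finset.range (c+1), w k * (b:ℤ)^(c-k)) = 0 := by linarith
      exact (mul_eq_zero.mp this).resolve_left hb0
    rcases Nat.lt_or_ge k (c+1) with h' | h'
    · exact ih hT k (by omega)
    · have : k = c+1 := by omega
      rw [this]; exact hlast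

lemma zeroLemma' (hb : 2 ≤ b) (w : ℕ → ℤ) (hw : ∀ k, |w k| ≤ (b:ℤ)-1) (c : ℕ) (Z : ℤ)
    (h : (∑ k ∈ Finset.range (c+1), w k * (b:ℤ)^(c-k)) = Z * (b:ℤ)^(c+1)) :
    ∀ k ≤ c, w k = 0 := by
  have hZ : Z = 0 := by
    by_contra hZ
    have h1 : (1:ℤ) ≤ |Z| := Int.one_le_abs (by exact_mod_cast hZ)
    have h2 := absSum hb w hw c
    rw [h, abs_mul, abs_pow, abs_of_nonneg (by positivity : (0:ℤ) ≤ (b:ℤ))] at h2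
    nlinarith [pow_pos (by exact_mod_cast Nat.lt_of_lt_of_le Nat.zero_lt_two hb : (0:ℤ) < (b:ℤ)) (c+1)]
  rw [hZ, zero_mul] at h
  exact zeroLemma hb w hw c h

lemma epsLemma (hb : 2 ≤ b) (w : ℕ → ℤ) (hw : ∀ k, |w k| ≤ (b:ℤ)-1)
    (ε : ℤ) (hε : ε = 1 ∨ ε = -1) :
    ∀ c, ∀ Z : ℤ, (∑ k ∈ Finset.range (c+1), w k * (b:ℤ)^(c-k)) = ε + Z * (b:ℤ)^(c+1) →
    ∃ s ≤ c, (∀ k < s, w k = 0) ∧ ∀ k, s ≤ k → k ≤ c → (b:ℤ) ∣ (w k - ε) := by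
  have hb0 : (0:ℤ) < (b:ℤ) := by exact_mod_cast Nat.lt_of_lt_of_le Nat.zero_lt_two hb
  intro c
  induction c with
  | zero =>
    intro Z h
    have h' : w 0 = ε + Z * (b:ℤ) := by simpa [Finset.sum_range_one] using h
    exact ⟨0, le_refl 0, fun k hk => absurd hk (Nat.not_lt_zero k), fun k hk hk' => by
      interval_cases k; exact ⟨Z, by linarith⟩⟩
  | succ c ih =>
    intro Z h
    rw [peelLast] at h
    set T := ∑ k ∈ Finset.range (c+1), w k * (b:ℤ)^(c-k) with hT
    have hpow : (b:ℤ)^(c+1+1) = (b:ℤ) * (b:ℤ)^(c+1) := by ring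
    rw [hpow] at h
    have hdvd : (b:ℤ) ∣ (w (c+1) - ε) := ⟨Z * (b:ℤ)^(c+1) - T, by linarith⟩
    rcases hdvd with ⟨D, hD⟩
    have hwc := abs_le.mp (hw (c+1))
    have hD1 : |D| ≤ 1 := by
      by_contra hcon
      have h2 : (2:ℤ) ≤ |D| := by omega
      have : |w (c+1) - ε| ≤ (b:ℤ) := by
        rcases hε with rfl | rfl <;> rw [abs_le] <;> constructor <;> linarith
      rw [hD, abs_mul, abs_of_nonneg hb0.le] at this
      nlinarith
    have hεD : D = 0 ∨ D = -ε ∨ D = ε := by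
      rcases hε with rfl | rfl <;> [skip; skip] <;>
        · rcases abs_le.mp hD1 with ⟨h1, h2⟩; omega
    rcases hεD with rfl | rfl | rfl
    · -- w (c+1) = ε, T ≡ 0
      have hwc1 : w (c+1) = ε := by linarith
      have hT0 : T = Z * (b:ℤ)^(c+1) :=
        mul_left_cancel₀ (ne_of_gt hb0) (by linear_combination h - hwc1)
      have hz := zeroLemma' hb w hw c Z hT0
      exact ⟨c+1, le_refl _, fun k hk => hz k (by omega), fun k hk hk' => by
        have : k = c+1 := by omega
        rw [this, hwc1]; simp⟩
    · -- w (c+1) = ε - εb, T ≡ ε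
      have hTe : T = ε + Z * (b:ℤ)^(c+1) :=
        mul_left_cancel₀ (ne_of_gt hb0) (by linear_combination h - hD)
      obtain ⟨s, hs, hz, hp⟩ := ih Z hTe
      refine ⟨s, by omega, hz, fun k hk hk' => ?_⟩
      rcases Nat.lt_or_ge k (c+1) with h' | h'
      · exact hp k hk (by omega)
      · have : k = c+1 := by omega
        rw [this]
        exact ⟨-ε, by linarith⟩
    · -- w (c+1) = ε + εb: contradiction
      exfalso
      rcases hε with rfl | rfl <;> simp at hD <;> omega

lemma carryLemma (hb : 2 ≤ b) (w : ℕ → ℤ) (hw : ∀ k, |w k| ≤ (b:ℤ)-1)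
    (c : ℕ) (r Z : ℤ) (hr : |r| ≤ (b:ℤ)-1)
    (h : ∑ k ∈ Finset.range (c+2), w k * (b:ℤ)^(c+1-k) = r + Z * (b:ℤ)^(c+2)) :
    (∀ k ≤ c, w k = 0) ∨
    ∃ s ≤ c, ∃ ε : ℤ, (ε = 1 ∨ ε = -1) ∧ (∀ k < s, w k = 0) ∧
      (∀ k, s ≤ k → k ≤ c → (b:ℤ) ∣ (w k - ε)) ∧ ¬ ((b:ℤ) ∣ w (c+1)) := by
  have hb0 : (0:ℤ) < (b:ℤ) := by exact_mod_cast Nat.lt_of_lt_of_le Nat.zero_lt_two hb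
  rw [peelLast] at h
  set T := ∑ k ∈ Finset.range (c+1), w k * (b:ℤ)^(c-k) with hT
  have hpow : (b:ℤ)^(c+2) = (b:ℤ) * (b:ℤ)^(c+1) := by ring
  rw [hpow] at h
  have hdvd : (b:ℤ) ∣ (r - w (c+1)) := ⟨T - Z * (b:ℤ)^(c+1), by linarith⟩
  rcases hdvd with ⟨D, hD⟩
  have hwc := abs_le.mp (hw (c+1))
  have hrr := abs_le.mp hr
  have hD1 : |D| ≤ 1 := by
    by_contra hcon
    have h2 : (2:ℤ) ≤ |D| := by omega
    have habs : |r - w (c+1)| ≤ 2*(b:ℤ) - 2 := by rw [abs_le]; constructor <;> linarith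
    rw [hD, abs_mul, abs_of_nonneg hb0.le] at habs
    nlinarith
  rcases abs_le.mp hD1 with ⟨hDl, hDr⟩
  have hDcase : D = 0 ∨ D = 1 ∨ D = -1 := by omega
  rcases hDcase with rfl | rfl | rfl
  · -- r = w (c+1), T ≡ 0
    left
    have hT0 : T = Z * (b:ℤ)^(c+1) :=
      mul_left_cancel₀ (ne_of_gt hb0) (by linear_combination h + hD)
    exact zeroLemma' hb w hw c Z hT0
  · -- r - w(c+1) = b : T ≡ 1
    right
    have hTe : T = 1 + Z * (b:ℤ)^(c+1) :=
      mul_left_cancel₀ (ne_of_gt hb0) (by linear_combination h + hD)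
    obtain ⟨s, hs, hz, hp⟩ := epsLemma hb w hw 1 (Or.inl rfl) c Z hTe
    refine ⟨s, hs, 1, Or.inl rfl, hz, hp, fun hcon => ?_⟩
    -- w (c+1) = r - b; if b ∣ w(c+1) then b ∣ r so r = 0, so w(c+1) = -b, too big
    rcases hcon with ⟨t, ht⟩
    have hrd : r = (b:ℤ) * (t + 1) := by rw [mul_add, mul_one]; linarith
    have hr0 : r = 0 := by
      rcases eq_or_ne (t+1) 0 with h0 | h0
      · rw [hrd, h0, mul_zero]
      · exfalso
        have := Int.one_le_abs (by exact_mod_cast h0 : (t+1) ≠ 0)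
        have : (b:ℤ) ≤ |r| := by rw [hrd, abs_mul, abs_of_nonneg hb0.le]; nlinarith
        linarith
    rw [hr0] at hD
    simp at hD
    omega
  · -- r - w(c+1) = -b : T ≡ -1
    right
    have hTe : T = -1 + Z * (b:ℤ)^(c+1) :=
      mul_left_cancel₀ (ne_of_gt hb0) (by linear_combination h + hD)
    obtain ⟨s, hs, hz, hp⟩ := epsLemma hb w hw (-1) (Or.inr rfl) c Z hTe
    refine ⟨s, hs, -1, Or.inr rfl, hz, hp, fun hcon => ?_⟩
    rcases hcon with ⟨t, ht⟩
    have hrd : r = (b:ℤ) * (t - 1) := by rw [mul_sub, mul_one]; linarith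
    have hr0 : r = 0 := by
      rcases eq_or_ne (t-1) 0 with h0 | h0
      · rw [hrd, h0, mul_zero]
      · exfalso
        have := Int.one_le_abs (by exact_mod_cast h0 : (t-1) ≠ 0)
        have : (b:ℤ) ≤ |r| := by rw [hrd, abs_mul, abs_of_nonneg hb0.le]; nlinarith
        linarith
    rw [hr0] at hD
    simp at hD
    omega

def dg (b m : ℕ) (F : Matrix (Fin m) (Fin m) (ZMod b)) (δ : Fin m → ZMod b) (n k : ℕ) : ℕ :=
  if h : k < m then ((F.mulVec (digitVec b m n) + δ) ⟨k, h⟩).val else 0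

variable {b m : ℕ}

lemma dg_lt (hb : 2 ≤ b) (F : Matrix (Fin m) (Fin m) (ZMod b)) (δ : Fin m → ZMod b)
    (n k : ℕ) : dg b m F δ n k < b := by
  haveI : NeZero b := ⟨by omega⟩
  unfold dg
  split
  · exact ZMod.val_lt _
  · omega

lemma netCoord_eq (F : Matrix (Fin m) (Fin m) (ZMod b)) (δ : Fin m → ZMod b) (n : ℕ) :
    netCoordShift b m F δ n = ∑ k ∈ Finset.range m, (dg b m F δ n k : ℝ) / (b:ℝ)^(k+1) := by
  rw [netCoordShift, ← Fin.sum_univ_eq_sum_range]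
  exact Finset.sum_congr rfl fun k _ => by simp [dg]

lemma geomR (hb : 2 ≤ b) : ∀ n : ℕ, ∑ i ∈ Finset.range n, ((b:ℝ)-1)/(b:ℝ)^(i+1)
    = 1 - 1/(b:ℝ)^n := by
  have hb0 : (0:ℝ) < (b:ℝ) := by positivity
  intro n
  induction n with
  | zero => simp
  | succ n ih =>
    rw [Finset.sum_range_succ, ih]
    have h1 : (b:ℝ)^n ≠ 0 := by positivity
    have h2 : (b:ℝ)^(n+1) ≠ 0 := by positivity
    field_simp
    ring

lemma bracket (hb : 2 ≤ b) (F : Matrix (Fin m) (Fin m) (ZMod b)) (δ : Fin m → ZMod b)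
    (n : ℕ) (c : ℕ) :
    ((∑ k ∈ Finset.range (c+1), (dg b m F δ n k : ℤ) * (b:ℤ)^(c-k) : ℤ) : ℝ)
      ≤ netCoordShift b m F δ n * (b:ℝ)^(c+1) ∧
    netCoordShift b m F δ n * (b:ℝ)^(c+1)
      < ((∑ k ∈ Finset.range (c+1), (dg b m F δ n k : ℤ) * (b:ℤ)^(c-k) : ℤ) : ℝ) + 1 := by
  have hb0 : (0:ℝ) < (b:ℝ) := by positivity
  set μ := min (c+1) m with hμ
  have hNR : ((∑ k ∈ Finset.range (c+1), (dg b m F δ n k : ℤ) * (b:ℤ)^(c-k) : ℤ) : ℝ)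
      = ∑ k ∈ Finset.range μ, (dg b m F δ n k : ℝ) * (b:ℝ)^(c-k) := by
    push_cast
    rw [← Finset.sum_subset (Finset.range_subset_range.mpr (min_le_left (c+1) m))]
    intro k hk hk'
    rw [Finset.mem_range] at hk
    rw [Finset.mem_range] at hk'
    have : ¬ k < m := by omega
    simp [dg, this]
  have hsplit : netCoordShift b m F δ n * (b:ℝ)^(c+1)
      = (∑ k ∈ Finset.range μ, (dg b m F δ n k : ℝ) * (b:ℝ)^(c-k))
        + ∑ k ∈ Finset.Ico μ m, (dg b m F δ n k : ℝ) * ((b:ℝ)^(c+1)/(b:ℝ)^(k+1)) := by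
    rw [netCoord_eq, Finset.sum_mul, Finset.range_eq_Ico,
      ← Finset.sum_Ico_consecutive _ (Nat.zero_le μ) (min_le_right (c+1) m),
      ← Finset.range_eq_Ico]
    congr 1
    · refine Finset.sum_congr rfl fun k hk => ?_
      rw [Finset.mem_range] at hk
      have hkc : k ≤ c := by omega
      rw [show c+1 = (c-k)+(k+1) by omega, pow_add]
      have hk1 : (b:ℝ)^(k+1) ≠ 0 := by positivity
      field_simp
      ring
    · refine Finset.sum_congr rfl fun k hk => ?_
      rw [div_mul_eq_mul_div, mul_div_assoc]
  have hR0 : 0 ≤ ∑ k ∈ Finset.Ico μ m, (dg b m F δ n k : ℝ) * ((b:ℝ)^(c+1)/(b:ℝ)^(k+1)) := by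
    refine Finset.sum_nonneg fun k _ => by positivity
  have hR1 : ∑ k ∈ Finset.Ico μ m, (dg b m F δ n k : ℝ) * ((b:ℝ)^(c+1)/(b:ℝ)^(k+1)) < 1 := by
    rcases le_or_gt m (c+1) with h | h
    · have : μ = m := by omega
      rw [this]
      simp
    · have hμc : μ = c+1 := by omega
      rw [hμc]
      have hle : ∑ k ∈ Finset.Ico (c+1) m, (dg b m F δ n k : ℝ) * ((b:ℝ)^(c+1)/(b:ℝ)^(k+1))
          ≤ ∑ k ∈ Finset.Ico (c+1) m, ((b:ℝ)-1) * ((b:ℝ)^(c+1)/(b:ℝ)^(k+1)) := by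
        refine Finset.sum_le_sum fun k _ => ?_
        have := dg_lt hb F δ n k
        have hv : (dg b m F δ n k : ℝ) ≤ (b:ℝ)-1 := by
          have : (dg b m F δ n k : ℝ) + 1 ≤ (b:ℝ) := by exact_mod_cast this
          linarith
        exact mul_le_mul_of_nonneg_right hv (by positivity)
      have heq : ∑ k ∈ Finset.Ico (c+1) m, ((b:ℝ)-1) * ((b:ℝ)^(c+1)/(b:ℝ)^(k+1))
          = ∑ i ∈ Finset.range (m-(c+1)), ((b:ℝ)-1)/(b:ℝ)^(i+1) := by
        rw [Finset.sum_Ico_eq_sum_range]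
        refine Finset.sum_congr rfl fun i _ => ?_
        have h1 : (b:ℝ)^(c+1+i+1) = (b:ℝ)^(c+1) * (b:ℝ)^(i+1) := by
          ring
        rw [h1]
        have h2 : (b:ℝ)^(c+1) ≠ 0 := by positivity
        have h3 : (b:ℝ)^(i+1) ≠ 0 := by positivity
        field_simp
      rw [geomR hb] at heq
      have hpos : (0:ℝ) < 1/(b:ℝ)^(m-(c+1)) := by positivity
      calc _ ≤ _ := hle
        _ = 1 - 1/(b:ℝ)^(m-(c+1)) := heq
        _ < 1 := by linarith
  constructor
  · rw [hNR, hsplit]; linarith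
  · rw [hNR, hsplit]; linarith

lemma close (hb : 2 ≤ b) (F F' : Matrix (Fin m) (Fin m) (ZMod b)) (δ δ' : Fin m → ZMod b)
    (c : ℕ) (n n' : ℕ) (L : ℤ)
    (h : ∃ z : ℤ, (L:ℝ) ≤ (netCoordShift b m F δ n + z) * (b:ℝ)^(c+1) ∧
      (netCoordShift b m F δ n + z) * (b:ℝ)^(c+1) < L + b)
    (h' : ∃ z : ℤ, (L:ℝ) ≤ (netCoordShift b m F' δ' n' + z) * (b:ℝ)^(c+1) ∧
      (netCoordShift b m F' δ' n' + z) * (b:ℝ)^(c+1) < L + b) :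
    ∃ r Z : ℤ, |r| ≤ (b:ℤ)-1 ∧
      ∑ k ∈ Finset.range (c+1), ((dg b m F δ n k : ℤ) - (dg b m F' δ' n' k : ℤ)) * (b:ℤ)^(c-k)
        = r + Z * (b:ℤ)^(c+1) := by
  obtain ⟨z, hz1, hz2⟩ := h
  obtain ⟨z', hz1', hz2'⟩ := h'
  set N : ℤ := ∑ k ∈ Finset.range (c+1), (dg b m F δ n k : ℤ) * (b:ℤ)^(c-k) with hN
  set N' : ℤ := ∑ k ∈ Finset.range (c+1), (dg b m F' δ' n' k : ℤ) * (b:ℤ)^(c-k) with hN'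
  obtain ⟨hbr1, hbr2⟩ := bracket hb F δ n c
  obtain ⟨hbr1', hbr2'⟩ := bracket hb F' δ' n' c
  have key : ∀ (x : ℝ) (M z : ℤ), (M:ℝ) ≤ x * (b:ℝ)^(c+1) → x * (b:ℝ)^(c+1) < M + 1 →
      (L:ℝ) ≤ (x + z) * (b:ℝ)^(c+1) → (x + z) * (b:ℝ)^(c+1) < L + b →
      L ≤ M + z * (b:ℤ)^(c+1) ∧ M + z * (b:ℤ)^(c+1) ≤ L + b - 1 := by
    intro x M z h1 h2 h3 h4
    rw [add_mul] at h3 h4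
    have e1 : ((z:ℝ)) * (b:ℝ)^(c+1) = ((z * (b:ℤ)^(c+1) : ℤ) : ℝ) := by push_cast; ring
    rw [e1] at h3 h4
    constructor
    · have : (L:ℝ) < ((M + z * (b:ℤ)^(c+1) : ℤ):ℝ) + 1 := by push_cast; push_cast at h2; linarith
      have h5 := Int.lt_add_one_iff.mp (by exact_mod_cast this)
      push_cast at h5 ⊢
      linarith
    · have : ((M + z * (b:ℤ)^(c+1) : ℤ):ℝ) < ((L + b : ℤ):ℝ) := by push_cast; push_cast at h1; linarith
      have h5 := Int.lt_iff_add_one_le.mp (by exact_mod_cast this)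
      push_cast at h5 ⊢
      linarith
  obtain ⟨k1, k2⟩ := key _ N z hbr1 hbr2 hz1 hz2
  obtain ⟨k1', k2'⟩ := key _ N' z' hbr1' hbr2' hz1' hz2'
  refine ⟨N - N' + (z - z') * (b:ℤ)^(c+1), z' - z, ?_, ?_⟩
  · rw [abs_le]
    constructor <;> nlinarith [k1, k2, k1', k2']
  · have : ∑ k ∈ Finset.range (c+1),
        ((dg b m F δ n k : ℤ) - (dg b m F' δ' n' k : ℤ)) * (b:ℤ)^(c-k) = N - N' := by
      rw [hN, hN', ← Finset.sum_sub_distrib]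
      exact Finset.sum_congr rfl fun k _ => by ring
    rw [this]
    ring

lemma wcast [NeZero b] (F : Matrix (Fin m) (Fin m) (ZMod b)) (δv : Fin m → ZMod b)
    (n n' k : ℕ) (hk : k < m) :
    (((dg b m F δv n k : ℤ) - (dg b m F δv n' k : ℤ) : ℤ) : ZMod b)
      = F.mulVec (digitVec b m n - digitVec b m n') ⟨k, hk⟩ := by
  simp only [dg, dif_pos hk]
  push_cast
  rw [ZMod.natCast_val, ZMod.natCast_val, ZMod.cast_id, ZMod.cast_id,
    Matrix.mulVec_sub]
  simp

lemma lpVal (W : Fin m → ZMod b) (k : ℕ) (hk : k < m) :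
    (lpF2 b m).mulVec W ⟨k, hk⟩
      = ∑ j ∈ Finset.range (m - k), (fun j => if h : j < m then W ⟨j, h⟩ else 0) j := by
  rw [Matrix.mulVec]
  show ∑ j : Fin m, lpF2 b m ⟨k, hk⟩ j * W j = _
  have h1 : ∀ j : Fin m, lpF2 b m ⟨k, hk⟩ j * W j
      = (fun jj : ℕ => if jj < m - k then (if h : jj < m then W ⟨jj, h⟩ else 0) else 0) (j : ℕ) := by
    intro j
    simp only [lpF2, Matrix.of_apply]
    by_cases hc : (k : ℕ) + (j : ℕ) + 2 ≤ m + 1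
    · rw [if_pos hc, one_mul, if_pos (by omega), dif_pos j.isLt]
    · rw [if_neg hc, zero_mul, if_neg (by omega)]
  rw [Finset.sum_congr rfl fun j _ => h1 j,
    Fin.sum_univ_eq_sum_range (fun jj : ℕ => if jj < m - k then (if h : jj < m then W ⟨jj, h⟩ else 0) else 0) m]
  rw [← Finset.sum_subset (Finset.range_subset_range.mpr (by omega : m - k ≤ m))]
  · exact Finset.sum_congr rfl fun j hj => by rw [if_pos (Finset.mem_range.mp hj)]
  · intro j hj hj'
    rw [Finset.mem_range] at hj hj'
    rw [if_neg (by omega)]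


lemma carryLemma' (hb : 2 ≤ b) (w : ℕ → ℤ) (hw : ∀ k, |w k| ≤ (b:ℤ)-1)
    (ℓ : ℕ) (hℓ : 1 ≤ ℓ) (r Z : ℤ) (hr : |r| ≤ (b:ℤ)-1)
    (h : ∑ k ∈ Finset.range (ℓ+1), w k * (b:ℤ)^(ℓ-k) = r + Z * (b:ℤ)^(ℓ+1)) :
    (∀ k < ℓ, w k = 0) ∨
    ∃ s < ℓ, ∃ ε : ℤ, (ε = 1 ∨ ε = -1) ∧ (∀ k < s, w k = 0) ∧
      (∀ k, s ≤ k → k < ℓ → (b:ℤ) ∣ (w k - ε)) ∧ ¬ ((b:ℤ) ∣ w ℓ) := by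
  obtain ⟨c, rfl⟩ : ∃ c, ℓ = c+1 := ⟨ℓ-1, by omega⟩
  have H := carryLemma hb w hw c r Z hr h
  rcases H with H | ⟨s, hs, ε, hε, hz, hp, hnd⟩
  · exact Or.inl fun k hk => H k (by omega)
  · exact Or.inr ⟨s, by omega, ε, hε, hz, fun k h1 h2 => hp k h1 (by omega), hnd⟩

noncomputable def lpPt (b m : ℕ) (δ : Fin 2 → Fin m → ZMod b) (n : ℕ) : Fin 2 → ℝ :=
  fun j => netCoordShift b m
    (if j = 0 then (1 : Matrix (Fin m) (Fin m) (ZMod b)) else lpF2 b m) (δ j) n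

lemma core (hb : b.Prime) (hm : 1 ≤ m) (δ : Fin 2 → Fin m → ZMod b)
    (c : Fin 2 → ℕ)
    (hc : if 3 < m then c 0 = (m+1)/2+1 ∧ c 1 = m/2+1 else c 0 = m ∧ c 1 = 0)
    (n n' : ℕ) (L : Fin 2 → ℤ)
    (hcl : ∀ j, ∃ z : ℤ, (L j : ℝ) ≤ (lpPt b m δ n j + z) * (b:ℝ)^(c j + 1) ∧
      (lpPt b m δ n j + z) * (b:ℝ)^(c j + 1) < L j + b)
    (hcl' : ∀ j, ∃ z : ℤ, (L j : ℝ) ≤ (lpPt b m δ n' j + z) * (b:ℝ)^(c j + 1) ∧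
      (lpPt b m δ n' j + z) * (b:ℝ)^(c j + 1) < L j + b) :
    lpPt b m δ n = lpPt b m δ n' := by
  have hb2 : 2 ≤ b := hb.two_le
  haveI : NeZero b := ⟨by omega⟩
  haveI : Fact (1 < b) := ⟨hb.one_lt⟩
  classical
  have hpt0 : ∀ N : ℕ, lpPt b m δ N 0 = netCoordShift b m 1 (δ 0) N := by
    intro N; simp [lpPt]
  have hpt1 : ∀ N : ℕ, lpPt b m δ N 1 = netCoordShift b m (lpF2 b m) (δ 1) N := by
    intro N; simp [lpPt]
  set w0 : ℕ → ℤ := fun k => (dg b m 1 (δ 0) n k : ℤ) - (dg b m 1 (δ 0) n' k : ℤ) with hw0d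
  set w1 : ℕ → ℤ := fun k => (dg b m (lpF2 b m) (δ 1) n k : ℤ)
    - (dg b m (lpF2 b m) (δ 1) n' k : ℤ) with hw1d
  have hbd : ∀ (F : Matrix (Fin m) (Fin m) (ZMod b)) (dv : Fin m → ZMod b) (k : ℕ),
      |(dg b m F dv n k : ℤ) - (dg b m F dv n' k : ℤ)| ≤ (b:ℤ) - 1 := by
    intro F dv k
    have h1 : (dg b m F dv n k : ℤ) < b := by exact_mod_cast dg_lt hb2 F dv n k
    have h2 : (dg b m F dv n' k : ℤ) < b := by exact_mod_cast dg_lt hb2 F dv n' k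
    have h3 : (0:ℤ) ≤ (dg b m F dv n k : ℤ) := Int.natCast_nonneg _
    have h4 : (0:ℤ) ≤ (dg b m F dv n' k : ℤ) := Int.natCast_nonneg _
    rw [abs_le]; omega
  have hbd0 : ∀ k, |w0 k| ≤ (b:ℤ) - 1 := fun k => hbd _ _ k
  have hbd1 : ∀ k, |w1 k| ≤ (b:ℤ) - 1 := fun k => hbd _ _ k
  set WN : ℕ → ZMod b := fun j =>
    if h : j < m then (digitVec b m n - digitVec b m n') ⟨j, h⟩ else 0 with hWNd
  set S : ℕ → ZMod b := fun r => ∑ j ∈ Finset.range r, WN j with hSd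
  have hSsucc : ∀ r, S (r+1) = S r + WN r := fun r => Finset.sum_range_succ WN r
  have hWX : ∀ k, ((w0 k : ℤ) : ZMod b) = WN k := by
    intro k
    by_cases hk : k < m
    · simp only [hw0d]
      rw [wcast (1 : Matrix (Fin m) (Fin m) (ZMod b)) (δ 0) n n' k hk, Matrix.one_mulVec,
        hWNd]
      simp [hk]
    · simp only [hw0d, hWNd]
      simp [dg, hk]
  have hVX : ∀ k, k < m → ((w1 k : ℤ) : ZMod b) = S (m - k) := by
    intro k hk
    simp only [hw1d]
    rw [wcast (lpF2 b m) (δ 1) n n' k hk, lpVal, hSd]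
  have hdvdc : ∀ (x ε : ℤ), (b:ℤ) ∣ x - ε → ((x : ZMod b) = (ε : ZMod b)) := by
    intro x ε h
    have h2 := (ZMod.intCast_zmod_eq_zero_iff_dvd (x - ε) b).mpr h
    push_cast at h2
    exact sub_eq_zero.mp h2
  have hndvdc : ∀ x : ℤ, ¬ ((b:ℤ) ∣ x) → ((x : ZMod b) ≠ 0) := by
    intro x h hcon
    exact h ((ZMod.intCast_zmod_eq_zero_iff_dvd x b).mp hcon)
  have hpm : ∀ ε : ℤ, (ε = 1 ∨ ε = -1) → ((ε : ZMod b) ≠ 0) := by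
    rintro ε (rfl | rfl) <;> simp
  suffices hall : ∀ j, WN j = 0 by
    have hu : digitVec b m n = digitVec b m n' := by
      funext k
      have h1 := hall (k : ℕ)
      rw [hWNd] at h1
      simp only [dif_pos k.isLt] at h1
      have h2 : (digitVec b m n - digitVec b m n') k = 0 := by
        convert h1 using 2
      rw [Pi.sub_apply, sub_eq_zero] at h2
      exact h2
    funext j
    simp only [lpPt, netCoordShift, hu]
  by_contra hcon
  push_neg at hcon
  obtain ⟨j0, hj0⟩ := hcon
  have hj0m : j0 < m := by
    by_contra hj
    exact hj0 (by rw [hWNd]; simp [show ¬ j0 < m by omega])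
  have hcl0 := hcl 0
  have hcl0' := hcl' 0
  rw [hpt0] at hcl0
  rw [hpt0] at hcl0'
  obtain ⟨r0, Z0, hr0, hs0⟩ := close hb2 1 1 (δ 0) (δ 0) (c 0) n n' (L 0) hcl0 hcl0'
  have hc01 : 1 ≤ c 0 := by
    by_cases h34 : 3 < m
    · rw [if_pos h34] at hc; omega
    · rw [if_neg h34] at hc; omega
  have HX := carryLemma' hb2 w0 hbd0 (c 0) hc01 r0 Z0 hr0 hs0
  by_cases h34 : 3 < m
  swap
  · rw [if_neg h34] at hc
    obtain ⟨hc0, -⟩ := hc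
    rw [hc0] at HX
    rcases HX with H | ⟨s, hs, ε, hε, hz, hp, hnd⟩
    · refine hj0 ?_
      rw [← hWX j0, H j0 hj0m]
      simp
    · refine hnd ⟨0, ?_⟩
      simp only [hw0d]
      simp [dg, show ¬ m < m by omega]
  · rw [if_pos h34] at hc
    obtain ⟨hc0, hc1⟩ := hc
    have hcl1 := hcl 1
    have hcl1' := hcl' 1
    rw [hpt1] at hcl1
    rw [hpt1] at hcl1'
    obtain ⟨r1, Z1, hr1, hs1⟩ :=
      close hb2 (lpF2 b m) (lpF2 b m) (δ 1) (δ 1) (c 1) n n' (L 1) hcl1 hcl1'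
    have HY := carryLemma' hb2 w1 hbd1 (c 1) (by omega) r1 Z1 hr1 hs1
    have A1 : c 0 + c 1 = m + 2 := by omega
    have A2 : 3 ≤ c 1 := by omega
    have A3 : c 1 ≤ m - 1 := by omega
    have A5 : 3 ≤ c 0 := by omega
    have A4 : c 0 ≤ m - 1 := by omega
    rcases HX with HXl | ⟨s, hsl, ε, hε, hz, hp, hnd⟩
    · -- all WN k = 0 for k < c 0
      have hWzero : ∀ k, k < c 0 → WN k = 0 := by
        intro k hk
        rw [← hWX k, HXl k hk]
        simp
      have hex : ∃ j, WN j ≠ 0 := ⟨j0, hj0⟩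
      have hsnz := Nat.find_spec hex
      set s := Nat.find hex with hsdef
      have hmin : ∀ k, k < s → WN k = 0 := fun k hk => by
        by_contra hne
        exact Nat.lt_irrefl _ (lt_of_le_of_lt (Nat.find_le hne) hk)
      have hsm : s < m := by
        by_contra hsm
        exact hsnz (by rw [hWNd]; simp [show ¬ s < m by omega])
      have hsc : c 0 ≤ s := by
        by_contra hcs
        exact hsnz (hWzero s (by omega))
      have hS1 : S (s+1) ≠ 0 := by
        rw [hSsucc]
        have hS0 : S s = 0 := Finset.sum_eq_zero fun j hj => hmin j (Finset.mem_range.mp hj)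
        rw [hS0, zero_add]
        exact hsnz
      rcases HY with HYl | ⟨t, htl, η, hη, hzY, hpY, hndY⟩
      · have h1 := hVX (m-1-s) (by omega)
        rw [show m - (m-1-s) = s + 1 by omega] at h1
        rw [HYl (m-1-s) (by omega)] at h1
        exact hS1 (by simpa using h1.symm)
      · have h1 := hVX (c 1) (by omega)
        rw [show m - c 1 = c 0 - 2 by omega] at h1
        have h2 : S (c 0 - 2) = 0 :=
          Finset.sum_eq_zero fun j hj => hmin j (by
            have := Finset.mem_range.mp hj
            omega)
        rw [h2] at h1
        exact (hndvdc _ hndY) h1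
    · -- x-carry case
      have hWc1 : WN (c 0) ≠ 0 := by
        rw [← hWX (c 0)]
        exact hndvdc _ hnd
      have hWpat : ∀ k, s ≤ k → k < c 0 → WN k = ((ε : ℤ) : ZMod b) := by
        intro k h1 h2
        rw [← hWX k]
        exact hdvdc _ _ (hp k h1 h2)
      have hεnz : ((ε : ℤ) : ZMod b) ≠ 0 := hpm ε hε
      have hcontra : S (c 0) = 0 → S (c 0 + 1) = 0 → False := by
        intro e2 e3
        rw [hSsucc, e2, zero_add] at e3
        exact hWc1 e3
      rcases HY with HYl | ⟨t, htl, η, hη, hzY, hpY, hndY⟩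
      · have e2 : S (c 0) = 0 := by
          have h1 := hVX (c 1 - 2) (by omega)
          rw [show m - (c 1 - 2) = c 0 by omega, HYl (c 1 - 2) (by omega)] at h1
          simpa using h1.symm
        have e3 : S (c 0 + 1) = 0 := by
          have h1 := hVX (c 1 - 3) (by omega)
          rw [show m - (c 1 - 3) = c 0 + 1 by omega, HYl (c 1 - 3) (by omega)] at h1
          simpa using h1.symm
        exact hcontra e2 e3
      · rcases Nat.lt_or_ge t (c 1 - 1) with htt | htt
        · -- t ≤ c 1 - 2 : pattern at c1-2 and c1-1
          have e1 : S (c 0) = ((η : ℤ) : ZMod b) := by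
            have h1 := hVX (c 1 - 2) (by omega)
            rw [show m - (c 1 - 2) = c 0 by omega] at h1
            rw [← h1]
            exact hdvdc _ _ (hpY (c 1 - 2) (by omega) (by omega))
          have e2 : S (c 0 - 1) = ((η : ℤ) : ZMod b) := by
            have h1 := hVX (c 1 - 1) (by omega)
            rw [show m - (c 1 - 1) = c 0 - 1 by omega] at h1
            rw [← h1]
            exact hdvdc _ _ (hpY (c 1 - 1) (by omega) (by omega))
          have h3 := hSsucc (c 0 - 1)
          rw [show c 0 - 1 + 1 = c 0 by omega] at h3
          have h4 : WN (c 0 - 1) = 0 := by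
            rw [e1, e2] at h3
            exact (left_eq_add.mp h3)
          have h5 : WN (c 0 - 1) = ((ε : ℤ) : ZMod b) :=
            hWpat (c 0 - 1) (by omega) (by omega)
          rw [h5] at h4
          exact hεnz h4
        · -- t = c 1 - 1 : zeros below t
          have e2 : S (c 0) = 0 := by
            have h1 := hVX (c 1 - 2) (by omega)
            rw [show m - (c 1 - 2) = c 0 by omega, hzY (c 1 - 2) (by omega)] at h1
            simpa using h1.symm
          have e3 : S (c 0 + 1) = 0 := by
            have h1 := hVX (c 1 - 3) (by omega)
            rw [show m - (c 1 - 3) = c 0 + 1 by omega, hzY (c 1 - 3) (by omega)] at h1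
            simpa using h1.symm
          exact hcontra e2 e3


end Stmt18Aux

/-- For prime `b` and `m ≥ 1`, every digitally shifted Larcher–Pillichshammer net
`Q(F₁,F₂) ⊕ δ` is `(⌈m/2⌉+1)`-separated and toroidally `(⌈m/2⌉+1)`-separated in base `b`;
consequently its separation radius satisfies `q_∞ ≥ (b−1)/(2b) · b^{−⌈m/2⌉−1}`. -/
theorem stmt18 (b m : ℕ) (hb : b.Prime) (hm : 1 ≤ m)
    (δ : Fin 2 → Fin m → ZMod b) :
    ∀ Q : Finset (Fin 2 → ℝ),
      Q = Finset.image
        (fun n : ℕ => fun j : Fin 2 =>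
          netCoordShift b m (if j = 0 then (1 : Matrix (Fin m) (Fin m) (ZMod b)) else lpF2 b m)
            (δ j) n)
        (Finset.range (b ^ m)) →
    IsSeparated b 2 ((m + 1) / 2 + 1) Q ∧
    IsTorSeparated b 2 ((m + 1) / 2 + 1) Q ∧
    ∀ x ∈ Q, ∀ y ∈ Q, x ≠ y →
      ((b : ℝ) - 1) / (2 * b) * ((b : ℝ) ^ ((m + 1) / 2 + 1))⁻¹ ≤ dist x y / 2 := by
  intro Q hQ
  have hb2 : 2 ≤ b := hb.two_le
  have hb0 : (0:ℝ) < (b:ℝ) := by positivity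
  have hb1 : (1:ℝ) ≤ (b:ℝ) := by exact_mod_cast Nat.one_le_of_lt hb2
  set κ := (m+1)/2 + 1 with hκ
  set c : Fin 2 → ℕ := if 3 < m then ![(m+1)/2+1, m/2+1] else ![m, 0] with hcdef
  have hc : if 3 < m then c 0 = (m+1)/2+1 ∧ c 1 = m/2+1 else c 0 = m ∧ c 1 = 0 := by
    by_cases h34 : 3 < m <;> simp [hcdef, h34]
  have hcκ : ∀ j, c j ≤ κ := by
    intro j
    by_cases h34 : 3 < m
    · fin_cases j <;> simp [hcdef, h34, hκ] <;> omega
    · fin_cases j <;> simp [hcdef, h34, hκ] <;> omega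
  have hmem : ∀ x ∈ Q, ∃ N : ℕ, x = Stmt18Aux.lpPt b m δ N := by
    intro x hx
    rw [hQ, Finset.mem_image] at hx
    obtain ⟨N, _, hN⟩ := hx
    exact ⟨N, hN.symm⟩
  -- converting interval bounds to the closeness form
  have bound_iff : ∀ (A : ℤ) (E : ℕ) (cj : ℕ) (y : ℝ),
      ((A:ℝ) - (E:ℝ)/b)/(b:ℝ)^cj ≤ y → y < ((A:ℝ) + ((b:ℝ)-(E:ℝ))/b)/(b:ℝ)^cj →
      ((A*b - E : ℤ):ℝ) ≤ y * (b:ℝ)^(cj+1) ∧ y * (b:ℝ)^(cj+1) < ((A*b - E : ℤ):ℝ) + b := by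
    intro A E cj y h1 h2
    have hp : (0:ℝ) < (b:ℝ)^cj := by positivity
    rw [div_le_iff₀ hp] at h1
    rw [lt_div_iff₀ hp] at h2
    have h1' := mul_le_mul_of_nonneg_right h1 hb0.le
    have h2' := mul_lt_mul_of_pos_right h2 hb0
    have hbne : (b:ℝ) ≠ 0 := ne_of_gt hb0
    have e1 : ((A:ℝ) - (E:ℝ)/b) * b = (A:ℝ)*b - E := by field_simp
    have e2 : ((A:ℝ) + ((b:ℝ)-(E:ℝ))/b) * b = (A:ℝ)*b - E + b := by field_simp; ring
    have e3 : y * (b:ℝ)^cj * b = y * (b:ℝ)^(cj+1) := by rw [pow_succ]; ring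
    rw [e1, e3] at h1'
    rw [e3, e2] at h2'
    constructor
    · push_cast; linarith
    · push_cast; linarith
  refine ⟨?_, ?_, ?_⟩
  · -- IsSeparated
    refine ⟨c, hcκ, fun a e ha he hsub => ?_⟩
    rintro p ⟨hpQ, hpJ⟩ q ⟨hqQ, hqJ⟩
    obtain ⟨N, rfl⟩ := hmem p hpQ
    obtain ⟨N', rfl⟩ := hmem q hqQ
    refine Stmt18Aux.core hb hm δ c hc N N' (fun j => (a j : ℤ)*b - e j) ?_ ?_
    · intro j
      obtain ⟨h1, h2⟩ := hpJ j
      refine ⟨0, ?_, ?_⟩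
      · have := (bound_iff (a j) (e j) (c j) _ h1 h2).1
        push_cast at this ⊢
        simpa using this
      · have := (bound_iff (a j) (e j) (c j) _ h1 h2).2
        push_cast at this ⊢
        simpa using this
    · intro j
      obtain ⟨h1, h2⟩ := hqJ j
      refine ⟨0, ?_, ?_⟩
      · have := (bound_iff (a j) (e j) (c j) _ h1 h2).1
        push_cast at this ⊢
        simpa using this
      · have := (bound_iff (a j) (e j) (c j) _ h1 h2).2
        push_cast at this ⊢
        simpa using this
  · -- IsTorSeparated
    refine ⟨c, hcκ, fun a e ha he => ?_⟩
    rintro p ⟨hpQ, hpJ⟩ q ⟨hqQ, hqJ⟩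
    obtain ⟨N, rfl⟩ := hmem p hpQ
    obtain ⟨N', rfl⟩ := hmem q hqQ
    refine Stmt18Aux.core hb hm δ c hc N N' (fun j => (a j : ℤ)*b - e j) ?_ ?_
    · intro j
      obtain ⟨z, h1, h2⟩ := hpJ.2 j
      refine ⟨z, ?_, ?_⟩
      · have := (bound_iff (a j) (e j) (c j) _ h1 h2).1
        push_cast at this ⊢
        simpa using this
      · have := (bound_iff (a j) (e j) (c j) _ h1 h2).2
        push_cast at this ⊢
        simpa using this
    · intro j
      obtain ⟨z, h1, h2⟩ := hqJ.2 j
      refine ⟨z, ?_, ?_⟩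
      · have := (bound_iff (a j) (e j) (c j) _ h1 h2).1
        push_cast at this ⊢
        simpa using this
      · have := (bound_iff (a j) (e j) (c j) _ h1 h2).2
        push_cast at this ⊢
        simpa using this
  · -- distance bound
    intro x hx y hy hxy
    by_contra hcon
    push_neg at hcon
    have hdist : dist x y < ((b:ℝ)-1)/(b:ℝ)^(κ+1) := by
      have h2 : dist x y < 2 * (((b:ℝ) - 1) / (2 * b) * ((b : ℝ) ^ κ)⁻¹) := by
        rw [hκ]; linarith [hcon]
      have e : 2 * (((b:ℝ) - 1) / (2 * b) * ((b : ℝ) ^ κ)⁻¹)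
          = ((b:ℝ)-1)/(b:ℝ)^(κ+1) := by
        rw [pow_succ]
        field_simp
        ring
      rwa [e] at h2
    obtain ⟨N, rfl⟩ := hmem x hx
    obtain ⟨N', rfl⟩ := hmem y hy
    have hclose : ∀ (u v : ℝ) (cj : ℕ), cj ≤ κ → |u - v| < ((b:ℝ)-1)/(b:ℝ)^(κ+1) →
        ∃ Lj : ℤ, ((Lj:ℝ) ≤ u * (b:ℝ)^(cj+1) ∧ u * (b:ℝ)^(cj+1) < Lj + b) ∧
          ((Lj:ℝ) ≤ v * (b:ℝ)^(cj+1) ∧ v * (b:ℝ)^(cj+1) < Lj + b) := by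
      intro u v cj hcj huv
      set X := u * (b:ℝ)^(cj+1) with hX
      set Y := v * (b:ℝ)^(cj+1) with hY
      have hXY : |X - Y| ≤ (b:ℝ) - 1 := by
        have e : X - Y = (u - v) * (b:ℝ)^(cj+1) := by rw [hX, hY]; ring
        rw [e, abs_mul, abs_of_nonneg (by positivity : (0:ℝ) ≤ (b:ℝ)^(cj+1))]
        have hple : (b:ℝ)^(cj+1) ≤ (b:ℝ)^(κ+1) := by
          exact pow_le_pow_right₀ hb1 (by omega)
        have h1 : |u - v| * (b:ℝ)^(cj+1) ≤ |u - v| * (b:ℝ)^(κ+1) :=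
          mul_le_mul_of_nonneg_left hple (abs_nonneg _)
        have h2 : |u - v| * (b:ℝ)^(κ+1) < (((b:ℝ)-1)/(b:ℝ)^(κ+1)) * (b:ℝ)^(κ+1) :=
          mul_lt_mul_of_pos_right huv (by positivity)
        have h3 : (((b:ℝ)-1)/(b:ℝ)^(κ+1)) * (b:ℝ)^(κ+1) = (b:ℝ)-1 := by
          field_simp
        linarith
      rcases abs_le.mp hXY with ⟨hd1, hd2⟩
      refine ⟨min ⌊X⌋ ⌊Y⌋, ⟨?_, ?_⟩, ⟨?_, ?_⟩⟩
      · calc ((min ⌊X⌋ ⌊Y⌋ : ℤ):ℝ) ≤ ((⌊X⌋:ℤ):ℝ) := by exact_mod_cast min_le_left _ _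
          _ ≤ X := Int.floor_le X
      · rcases le_total (⌊X⌋:ℤ) ⌊Y⌋ with hm1 | hm1
        · rw [min_eq_left hm1]
          have := Int.lt_floor_add_one X
          linarith
        · rw [min_eq_right hm1]
          have := Int.lt_floor_add_one Y
          linarith
      · calc ((min ⌊X⌋ ⌊Y⌋ : ℤ):ℝ) ≤ ((⌊Y⌋:ℤ):ℝ) := by exact_mod_cast min_le_right _ _
          _ ≤ Y := Int.floor_le Y
      · rcases le_total (⌊X⌋:ℤ) ⌊Y⌋ with hm1 | hm1
        · rw [min_eq_left hm1]
          have := Int.lt_floor_add_one X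
          linarith
        · rw [min_eq_right hm1]
          have := Int.lt_floor_add_one Y
          linarith
    have hLs : ∀ j : Fin 2, ∃ Lj : ℤ,
        ((Lj:ℝ) ≤ Stmt18Aux.lpPt b m δ N j * (b:ℝ)^(c j+1) ∧
          Stmt18Aux.lpPt b m δ N j * (b:ℝ)^(c j+1) < Lj + b) ∧
        ((Lj:ℝ) ≤ Stmt18Aux.lpPt b m δ N' j * (b:ℝ)^(c j+1) ∧
          Stmt18Aux.lpPt b m δ N' j * (b:ℝ)^(c j+1) < Lj + b) := by
      intro j
      refine hclose _ _ (c j) (hcκ j) ?_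
      calc |Stmt18Aux.lpPt b m δ N j - Stmt18Aux.lpPt b m δ N' j|
          = dist (Stmt18Aux.lpPt b m δ N j) (Stmt18Aux.lpPt b m δ N' j) := by
            rw [Real.dist_eq]
        _ ≤ dist (Stmt18Aux.lpPt b m δ N) (Stmt18Aux.lpPt b m δ N') :=
            dist_le_pi_dist _ _ j
        _ < ((b:ℝ)-1)/(b:ℝ)^(κ+1) := hdist
    choose L hL1 hL2 using hLs
    refine hxy (Stmt18Aux.core hb hm δ c hc N N' L ?_ ?_)
    · intro j
      exact ⟨0, by push_cast; simpa using (hL1 j).1, by push_cast; simpa using (hL1 j).2⟩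
    · intro j
      exact ⟨0, by push_cast; simpa using (hL2 j).1, by push_cast; simpa using (hL2 j).2⟩
end
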